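/- arXiv:1904.04276 — 7 statements merged into one kernel-verified Lean document; each statement's English description precedes it below -/
import Mathlib

section
/- Let (Ω, F, P) be a probability space, X a random element of a measurable space S, and Y, A bounded real-valued random variables. Let b, p : S → ℝ be measurable functions such that b(X) is a version of the conditional expectation E[Y | σ(X)] and p(X) is a version of E[A | σ(X)], and let b̂, p̂ : S → ℝ be fixed bounded measurable functions. Then E[(Y − b̂(X))(A − p̂(X))] − E[(Y − b(X))(A − p(X))] = E[(b(X) − b̂(X))(p(X) − p̂(X))]. In particular this bias vanishes if b̂(X) = b(X) almost surely or p̂(X) = p(X) almost surely (double robustness). -/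
open MeasureTheory

/-- The conditional bias identity for the doubly robust estimator
(Theorem `thm:drml_cond`): with `b ∘ X` a version of `E[Y | σ(X)]` and `p ∘ X` a version of
`E[A | σ(X)]`, the bias `E[(Y - b̂(X))(A - p̂(X))] - E[(Y - b(X))(A - p(X))]` equals
`E[(b(X) - b̂(X))(p(X) - p̂(X))]`; in particular it vanishes if `b̂(X) = b(X)` a.s. or
`p̂(X) = p(X)` a.s. (double robustness). -/
theorem stmt0 {Ω S : Type*} [MeasurableSpace Ω] [MeasurableSpace S]
    (P : Measure Ω) [IsProbabilityMeasure P]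
    (X : Ω → S) (hX : Measurable X)
    (Y A : Ω → ℝ) (hY : Measurable Y) (hA : Measurable A)
    (CY CA : ℝ) (hYb : ∀ ω, |Y ω| ≤ CY) (hAb : ∀ ω, |A ω| ≤ CA)
    (b p bh ph : S → ℝ) (hb : Measurable b) (hp : Measurable p)
    (hbh : Measurable bh) (hph : Measurable ph)
    (Cb Cp : ℝ) (hbhB : ∀ s, |bh s| ≤ Cb) (hphB : ∀ s, |ph s| ≤ Cp)
    (hbX : (fun ω => b (X ω)) =ᵐ[P] P[Y | MeasurableSpace.comap X inferInstance])
    (hpX : (fun ω => p (X ω)) =ᵐ[P] P[A | MeasurableSpace.comap X inferInstance]) :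
    ((∫ ω, (Y ω - bh (X ω)) * (A ω - ph (X ω)) ∂P)
        - ∫ ω, (Y ω - b (X ω)) * (A ω - p (X ω)) ∂P
      = ∫ ω, (b (X ω) - bh (X ω)) * (p (X ω) - ph (X ω)) ∂P)
    ∧ ((((fun ω => bh (X ω)) =ᵐ[P] fun ω => b (X ω))
          ∨ ((fun ω => ph (X ω)) =ᵐ[P] fun ω => p (X ω))) →
        (∫ ω, (Y ω - bh (X ω)) * (A ω - ph (X ω)) ∂P)
          - ∫ ω, (Y ω - b (X ω)) * (A ω - p (X ω)) ∂P = 0) := by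
  have hm : MeasurableSpace.comap X inferInstance ≤ ‹MeasurableSpace Ω› := hX.comap_le
  haveI : SigmaFinite (P.trim hm) := by
    haveI : IsFiniteMeasure (P.trim hm) := isFiniteMeasure_trim hm
    infer_instance
  have hXm : Measurable[MeasurableSpace.comap X inferInstance] X :=
    Measurable.of_comap_le le_rfl
  -- integrability of products of a.e. bounded measurable functions
  have intgr : ∀ (f g : Ω → ℝ), Measurable f → Measurable g →
      ∀ Cf Cg : ℝ, (∀ᵐ ω ∂P, |f ω| ≤ Cf) → (∀ᵐ ω ∂P, |g ω| ≤ Cg) →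
      Integrable (fun ω => f ω * g ω) P := by
    intro f g hf hg Cf Cg hfB hgB
    refine (integrable_const (Cf * Cg)).mono' (hf.mul hg).aestronglyMeasurable ?_
    filter_upwards [hfB, hgB] with ω h1 h2
    simp only [Real.norm_eq_abs, abs_mul]
    exact mul_le_mul h1 h2 (abs_nonneg _) ((abs_nonneg _).trans h1)
  -- a.e. bounds on b ∘ X and p ∘ X via conditional expectation bounds
  have hYb' : ∀ᵐ ω ∂P, |Y ω| ≤ (CY.toNNReal : ℝ) :=
    ae_of_all _ fun ω => (hYb ω).trans (Real.le_coe_toNNReal CY)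
  have hAb' : ∀ᵐ ω ∂P, |A ω| ≤ (CA.toNNReal : ℝ) :=
    ae_of_all _ fun ω => (hAb ω).trans (Real.le_coe_toNNReal CA)
  have hbB : ∀ᵐ ω ∂P, |b (X ω)| ≤ (CY.toNNReal : ℝ) := by
    filter_upwards [hbX,
      ae_bdd_condExp_of_ae_bdd (m := MeasurableSpace.comap X inferInstance) hYb'] with ω h1 h2
    rw [h1]; exact h2
  have hpB : ∀ᵐ ω ∂P, |p (X ω)| ≤ (CA.toNNReal : ℝ) := by
    filter_upwards [hpX,
      ae_bdd_condExp_of_ae_bdd (m := MeasurableSpace.comap X inferInstance) hAb'] with ω h1 h2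
    rw [h1]; exact h2
  -- the key conditioning identity
  have key : ∀ (f : Ω → ℝ) (c g : S → ℝ), Measurable f → Measurable c → Measurable g →
      ∀ Cf Cg : ℝ, (∀ᵐ ω ∂P, |f ω| ≤ Cf) → (∀ᵐ ω ∂P, |g (X ω)| ≤ Cg) →
      ((fun ω => c (X ω)) =ᵐ[P] P[f | MeasurableSpace.comap X inferInstance]) →
      ∫ ω, f ω * g (X ω) ∂P = ∫ ω, c (X ω) * g (X ω) ∂P := by
    intro f c g hf hc hg Cf Cg hfB hgB hcX
    have hgm : StronglyMeasurable[MeasurableSpace.comap X inferInstance]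
        (fun ω => g (X ω)) := (hg.comp hXm).stronglyMeasurable
    have hfi : Integrable f P :=
      (integrable_const Cf).mono' hf.aestronglyMeasurable
        (hfB.mono fun ω h => by simpa using h)
    have hfgi : Integrable ((fun ω => g (X ω)) * f) P := by
      have := intgr (fun ω => g (X ω)) f (hg.comp hX) hf Cg Cf hgB hfB
      simpa [Pi.mul_def] using this
    have h1 : P[(fun ω => g (X ω)) * f | MeasurableSpace.comap X inferInstance]
        =ᵐ[P] (fun ω => g (X ω)) * P[f | MeasurableSpace.comap X inferInstance] :=
      condExp_mul_of_stronglyMeasurable_left hgm hfgi hfi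
    calc ∫ ω, f ω * g (X ω) ∂P = ∫ ω, ((fun ω => g (X ω)) * f) ω ∂P := by
          simp [mul_comm]
      _ = ∫ ω, (P[(fun ω => g (X ω)) * f | MeasurableSpace.comap X inferInstance]) ω ∂P :=
          (integral_condExp hm).symm
      _ = ∫ ω, c (X ω) * g (X ω) ∂P := by
          refine integral_congr_ae ?_
          filter_upwards [h1, hcX] with ω h hc'
          simp only [Pi.mul_apply] at h ⊢
          rw [h, ← hc', mul_comm]
  have hbhB' : ∀ᵐ ω ∂P, |bh (X ω)| ≤ Cb := ae_of_all _ fun ω => hbhB (X ω)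
  have hphB' : ∀ᵐ ω ∂P, |ph (X ω)| ≤ Cp := ae_of_all _ fun ω => hphB (X ω)
  -- four applications of the key identity
  have k1 : ∫ ω, Y ω * p (X ω) ∂P = ∫ ω, b (X ω) * p (X ω) ∂P :=
    key Y b p hY hb hp _ _ hYb' hpB hbX
  have k2 : ∫ ω, Y ω * ph (X ω) ∂P = ∫ ω, b (X ω) * ph (X ω) ∂P :=
    key Y b ph hY hb hph _ _ hYb' hphB' hbX
  have k3 : ∫ ω, A ω * b (X ω) ∂P = ∫ ω, p (X ω) * b (X ω) ∂P :=
    key A p b hA hp hb _ _ hAb' hbB hpX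
  have k4 : ∫ ω, A ω * bh (X ω) ∂P = ∫ ω, p (X ω) * bh (X ω) ∂P :=
    key A p bh hA hp hbh _ _ hAb' hbhB' hpX
  -- integrability of all elementary products (with beta-reduced types)
  have iYA : Integrable (fun ω => Y ω * A ω) P := intgr Y A hY hA _ _ hYb' hAb'
  have iYp : Integrable (fun ω => Y ω * p (X ω)) P :=
    intgr Y (fun ω => p (X ω)) hY (hp.comp hX) _ _ hYb' hpB
  have iYph : Integrable (fun ω => Y ω * ph (X ω)) P :=
    intgr Y (fun ω => ph (X ω)) hY (hph.comp hX) _ _ hYb' hphB'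
  have ibA : Integrable (fun ω => b (X ω) * A ω) P :=
    intgr (fun ω => b (X ω)) A (hb.comp hX) hA _ _ hbB hAb'
  have ibhA : Integrable (fun ω => bh (X ω) * A ω) P :=
    intgr (fun ω => bh (X ω)) A (hbh.comp hX) hA _ _ hbhB' hAb'
  have ibp : Integrable (fun ω => b (X ω) * p (X ω)) P :=
    intgr _ _ (hb.comp hX) (hp.comp hX) _ _ hbB hpB
  have ibph : Integrable (fun ω => b (X ω) * ph (X ω)) P :=
    intgr _ _ (hb.comp hX) (hph.comp hX) _ _ hbB hphB'
  have ibhp : Integrable (fun ω => bh (X ω) * p (X ω)) P :=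
    intgr _ _ (hbh.comp hX) (hp.comp hX) _ _ hbhB' hpB
  have ibhph : Integrable (fun ω => bh (X ω) * ph (X ω)) P :=
    intgr _ _ (hbh.comp hX) (hph.comp hX) _ _ hbhB' hphB'
  -- expansions
  have iE1 : Integrable (fun ω => Y ω * A ω - Y ω * ph (X ω)) P := iYA.sub iYph
  have iE2 : Integrable (fun ω => bh (X ω) * A ω - bh (X ω) * ph (X ω)) P := ibhA.sub ibhph
  have iE3 : Integrable (fun ω => Y ω * A ω - Y ω * p (X ω)) P := iYA.sub iYp
  have iE4 : Integrable (fun ω => b (X ω) * A ω - b (X ω) * p (X ω)) P := ibA.sub ibp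
  have iE5 : Integrable (fun ω => b (X ω) * p (X ω) - b (X ω) * ph (X ω)) P := ibp.sub ibph
  have iE6 : Integrable (fun ω => bh (X ω) * p (X ω) - bh (X ω) * ph (X ω)) P := ibhp.sub ibhph
  have e1 : ∫ ω, (Y ω - bh (X ω)) * (A ω - ph (X ω)) ∂P
      = (∫ ω, Y ω * A ω ∂P - ∫ ω, Y ω * ph (X ω) ∂P)
        - (∫ ω, bh (X ω) * A ω ∂P - ∫ ω, bh (X ω) * ph (X ω) ∂P) := by
    have h : (fun ω => (Y ω - bh (X ω)) * (A ω - ph (X ω)))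
        = fun ω => (Y ω * A ω - Y ω * ph (X ω)) - (bh (X ω) * A ω - bh (X ω) * ph (X ω)) := by
      funext ω; ring
    rw [h, integral_sub iE1 iE2, integral_sub iYA iYph, integral_sub ibhA ibhph]
  have e2 : ∫ ω, (Y ω - b (X ω)) * (A ω - p (X ω)) ∂P
      = (∫ ω, Y ω * A ω ∂P - ∫ ω, Y ω * p (X ω) ∂P)
        - (∫ ω, b (X ω) * A ω ∂P - ∫ ω, b (X ω) * p (X ω) ∂P) := by
    have h : (fun ω => (Y ω - b (X ω)) * (A ω - p (X ω)))
        = fun ω => (Y ω * A ω - Y ω * p (X ω)) - (b (X ω) * A ω - b (X ω) * p (X ω)) := by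
      funext ω; ring
    rw [h, integral_sub iE3 iE4, integral_sub iYA iYp, integral_sub ibA ibp]
  have e3 : ∫ ω, (b (X ω) - bh (X ω)) * (p (X ω) - ph (X ω)) ∂P
      = (∫ ω, b (X ω) * p (X ω) ∂P - ∫ ω, b (X ω) * ph (X ω) ∂P)
        - (∫ ω, bh (X ω) * p (X ω) ∂P - ∫ ω, bh (X ω) * ph (X ω) ∂P) := by
    have h : (fun ω => (b (X ω) - bh (X ω)) * (p (X ω) - ph (X ω)))
        = fun ω => (b (X ω) * p (X ω) - b (X ω) * ph (X ω))
          - (bh (X ω) * p (X ω) - bh (X ω) * ph (X ω)) := by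
      funext ω; ring
    rw [h, integral_sub iE5 iE6, integral_sub ibp ibph, integral_sub ibhp ibhph]
  -- commuted versions
  have c3 : ∫ ω, bh (X ω) * A ω ∂P = ∫ ω, bh (X ω) * p (X ω) ∂P := by
    have h1 : ∫ ω, bh (X ω) * A ω ∂P = ∫ ω, A ω * bh (X ω) ∂P := by simp [mul_comm]
    have h2 : ∫ ω, p (X ω) * bh (X ω) ∂P = ∫ ω, bh (X ω) * p (X ω) ∂P := by simp [mul_comm]
    rw [h1, k4, h2]
  have c4 : ∫ ω, b (X ω) * A ω ∂P = ∫ ω, b (X ω) * p (X ω) ∂P := by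
    have h1 : ∫ ω, b (X ω) * A ω ∂P = ∫ ω, A ω * b (X ω) ∂P := by simp [mul_comm]
    have h2 : ∫ ω, p (X ω) * b (X ω) ∂P = ∫ ω, b (X ω) * p (X ω) ∂P := by simp [mul_comm]
    rw [h1, k3, h2]
  have main : (∫ ω, (Y ω - bh (X ω)) * (A ω - ph (X ω)) ∂P)
      - ∫ ω, (Y ω - b (X ω)) * (A ω - p (X ω)) ∂P
      = ∫ ω, (b (X ω) - bh (X ω)) * (p (X ω) - ph (X ω)) ∂P := by
    rw [e1, e2, e3, k1, k2, c3, c4]; ring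
  refine ⟨main, fun h => ?_⟩
  rw [main]
  have hz : (fun ω => (b (X ω) - bh (X ω)) * (p (X ω) - ph (X ω)))
      =ᵐ[P] (fun _ => (0 : ℝ)) := by
    rcases h with h | h
    · filter_upwards [h] with ω hω
      simp [hω]
    · filter_upwards [h] with ω hω
      simp [hω]
  rw [integral_congr_ae hz, integral_const]
  simp
end

section
/- Work on a probability space with X a random element of a measurable space S and Y, A bounded real random variables; let b, p : S → ℝ be measurable with b(X) a version of E[Y | σ(X)] and p(X) a version of E[A | σ(X)]; let b̂, p̂ : S → ℝ and z̄ : S → ℝᵏ be bounded measurable with Ω := E[z̄(X) z̄(X)ᵀ] invertible. Let O₁ = (Y₁, A₁, X₁), …, Oₙ = (Yₙ, Aₙ, Xₙ) (n ≥ 2) be i.i.d. copies of (Y, A, X), and define the second-order U-statistic ÎF₂₂ := (1/(n(n−1))) Σ_{1 ≤ i₁ ≠ i₂ ≤ n} (Y_{i₁} − b̂(X_{i₁})) z̄(X_{i₁})ᵀ Ω⁻¹ z̄(X_{i₂}) (A_{i₂} − p̂(X_{i₂})). Then E[ÎF₂₂] = E[(b(X) − b̂(X)) z̄(X)ᵀ]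 Ω⁻¹ E[z̄(X)(p(X) − p̂(X))], i.e. ÎF₂₂ is an unbiased estimator of the projected bias cBias_{θ,k}(ψ̂₁) = ⟨Π[b−b̂ | Z̄_k], Π[p−p̂ | Z̄_k]⟩ in L²(law of X). -/
/-!
For `i ≠ j` the coordinates `ω i`, `ω j` are independent with law `P` under the product measure,
so each of the `n (n - 1)` off-diagonal terms of the U-statistic has expectation
`∫ K d(P ⊗ P)`. The kernel is bilinear in functions of the two arguments, so this integral
factors into `∑ a c, E[(Y - b̂(X)) z_a(X)] (G⁻¹)_{ac} E[z_c(X) (A - p̂(X))]`, and the tower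
property replaces `Y` and `A` by `b(X)` and `p(X)`, since `z(X)`, `b̂(X)`, `p̂(X)` are
`σ(X)`-measurable.
-/

open MeasureTheory ProbabilityTheory Finset

section Pi

variable {ι Ω : Type*} [Fintype ι] [MeasurableSpace Ω] (μ : Measure Ω) [IsProbabilityMeasure μ]

theorem measurePreserving_eval_prodMk_eval {i j : ι} (hij : i ≠ j) :
    MeasurePreserving (fun ω : ι → Ω => (ω i, ω j)) (Measure.pi fun _ => μ) (μ.prod μ) where
  measurable := by fun_prop
  map_eq := by
    have hind : IndepFun (fun ω : ι → Ω => ω i) (fun ω => ω j) (Measure.pi fun _ => μ) :=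
      (iIndepFun_pi (μ := fun _ : ι => μ) (X := fun _ => id) fun _ => aemeasurable_id).indepFun hij
    rw [(indepFun_iff_map_prod_eq_prod_map_map (measurable_pi_apply i).aemeasurable
      (measurable_pi_apply j).aemeasurable).1 hind,
      (measurePreserving_eval _ i).map_eq, (measurePreserving_eval _ j).map_eq]

theorem integral_sum_offDiag_pi [DecidableEq ι] {K : Ω → Ω → ℝ}
    (hK : Integrable (Function.uncurry K) (μ.prod μ)) :
    ∫ ω, ∑ i : ι, ∑ j : ι, (if i = j then 0 else K (ω i) (ω j)) ∂(Measure.pi fun _ => μ)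
      = (Fintype.card ι * (Fintype.card ι - 1)) * ∫ q, K q.1 q.2 ∂(μ.prod μ) := by
  have hint : ∀ i j : ι, Integrable (fun ω : ι → Ω => if i = j then 0 else K (ω i) (ω j))
      (Measure.pi fun _ => μ) := by
    intro i j
    split_ifs with hij
    · exact integrable_zero _ _ _
    · exact (measurePreserving_eval_prodMk_eval μ hij).integrable_comp_of_integrable hK
  have hterm : ∀ i j : ι, ∫ ω, (if i = j then 0 else K (ω i) (ω j)) ∂(Measure.pi fun _ => μ)
      = if i = j then 0 else ∫ q, K q.1 q.2 ∂(μ.prod μ) := by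
    intro i j
    split_ifs with hij
    · exact integral_zero _ _
    · have hmp := measurePreserving_eval_prodMk_eval μ hij
      rw [← hmp.map_eq] at hK ⊢
      exact (integral_map hmp.measurable.aemeasurable hK.aestronglyMeasurable).symm
  have hcount : ∀ c : ℝ, ∑ i : ι, ∑ j : ι, (if i = j then 0 else c)
      = Fintype.card ι * (Fintype.card ι - 1) * c := by
    intro c
    have h : ∀ i j : ι, (if i = j then 0 else c) = c - if i = j then c else 0 := by
      intro i j; split_ifs <;> ring
    simp only [h, sum_sub_distrib, sum_ite_eq, mem_univ, if_true, sum_const, card_univ,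
      nsmul_eq_mul]
    ring
  rw [integral_finsetSum _ fun i _ => integrable_finsetSum _ fun j _ => hint i j]
  simp_rw [integral_finsetSum _ fun j _ => hint _ j, hterm]
  exact hcount _

theorem integral_uStatistic_pi {n : ℕ} (hn : 2 ≤ n) {K : Ω → Ω → ℝ}
    (hK : Integrable (Function.uncurry K) (μ.prod μ)) :
    ∫ ω, ((n : ℝ) * ((n : ℝ) - 1))⁻¹ *
        ∑ i : Fin n, ∑ j : Fin n, (if i = j then 0 else K (ω i) (ω j))
        ∂(Measure.pi fun _ => μ)
      = ∫ q, K q.1 q.2 ∂(μ.prod μ) := by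
  have hn' : (n : ℝ) * ((n : ℝ) - 1) ≠ 0 := by
    have : (2 : ℝ) ≤ n := by exact_mod_cast hn
    exact mul_ne_zero (by linarith) (by linarith)
  rw [integral_const_mul, integral_sum_offDiag_pi μ hK, Fintype.card_fin, inv_mul_cancel_left₀ hn']

end Pi

section Bilin

variable {α β ι κ : Type*} [Fintype ι] [Fintype κ] [MeasurableSpace α] [MeasurableSpace β]
  {μ : Measure α} {ν : Measure β} {F : ι → α → ℝ} {H : κ → β → ℝ}

theorem MeasureTheory.Integrable.mul_const_mul_prod {f : α → ℝ} {g : β → ℝ} (hf : Integrable f μ)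
    (hg : Integrable g ν) (m : ℝ) :
    Integrable (fun q : α × β => f q.1 * m * g q.2) (μ.prod ν) :=
  (hf.mul_prod hg).const_mul m |>.congr (ae_of_all _ fun q => by ring)

theorem integrable_prod_bilin (hF : ∀ a, Integrable (F a) μ) (hH : ∀ c, Integrable (H c) ν)
    (M : Matrix ι κ ℝ) :
    Integrable (fun q : α × β => ∑ a, ∑ c, F a q.1 * M a c * H c q.2) (μ.prod ν) :=
  integrable_finsetSum _ fun a _ => integrable_finsetSum _ fun c _ =>
    (hF a).mul_const_mul_prod (hH c) (M a c)

theorem integral_prod_bilin [SFinite μ] [SFinite ν] (hF : ∀ a, Integrable (F a) μ)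
    (hH : ∀ c, Integrable (H c) ν) (M : Matrix ι κ ℝ) :
    ∫ q, ∑ a, ∑ c, F a q.1 * M a c * H c q.2 ∂(μ.prod ν)
      = ∑ a, ∑ c, (∫ x, F a x ∂μ) * M a c * ∫ y, H c y ∂ν := by
  have hterm : ∀ a c, Integrable (fun q : α × β => F a q.1 * M a c * H c q.2) (μ.prod ν) :=
    fun a c => (hF a).mul_const_mul_prod (hH c) (M a c)
  rw [integral_finsetSum _ fun a _ => integrable_finsetSum _ fun c _ => hterm a c]
  refine sum_congr rfl fun a _ => ?_
  rw [integral_finsetSum _ fun c _ => hterm a c]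
  refine sum_congr rfl fun c _ => ?_
  calc ∫ q, F a q.1 * M a c * H c q.2 ∂(μ.prod ν)
      = M a c * ∫ q, F a q.1 * H c q.2 ∂(μ.prod ν) := by
        rw [← integral_const_mul]; congr 1; funext q; ring
    _ = (∫ x, F a x ∂μ) * M a c * ∫ y, H c y ∂ν := by rw [integral_prod_mul]; ring

end Bilin

section Tower

variable {Ω S : Type*} {m₀ : MeasurableSpace Ω} [MeasurableSpace S] {μ : Measure Ω}
  [IsFiniteMeasure μ]

theorem integral_mul_eq_integral_condExp_mul {m : MeasurableSpace Ω} (hm : m ≤ m₀)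
    {f φ : Ω → ℝ} (hf : Integrable f μ) (hφ : StronglyMeasurable[m] φ) {D : ℝ}
    (hφD : ∀ᵐ ω ∂μ, ‖φ ω‖ ≤ D) :
    ∫ ω, f ω * φ ω ∂μ = ∫ ω, μ[f | m] ω * φ ω ∂μ :=
  calc ∫ ω, f ω * φ ω ∂μ = ∫ ω, μ[f * φ | m] ω ∂μ := (integral_condExp hm).symm
    _ = ∫ ω, μ[f | m] ω * φ ω ∂μ :=
      integral_congr_ae (condExp_mul_of_stronglyMeasurable_right hφ
        (hf.mul_bdd (hφ.mono hm).aestronglyMeasurable hφD) hf)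

theorem integral_sub_comp_mul_comp_eq_of_condExp {X : Ω → S} (hX : Measurable X)
    {Y : Ω → ℝ} (hY : Integrable Y μ) {b bh g : S → ℝ} (hbh : Measurable bh)
    (hbhX : Integrable (fun ω => bh (X ω)) μ) (hg : Measurable g) {D : ℝ}
    (hgD : ∀ s, |g s| ≤ D)
    (hbX : (fun ω => b (X ω)) =ᵐ[μ] μ[Y | MeasurableSpace.comap X inferInstance]) :
    ∫ ω, (Y ω - bh (X ω)) * g (X ω) ∂μ = ∫ ω, (b (X ω) - bh (X ω)) * g (X ω) ∂μ := by
  have hXm : Measurable[MeasurableSpace.comap X inferInstance] X := comap_measurable X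
  have hbh_cond : μ[fun ω => bh (X ω) | MeasurableSpace.comap X inferInstance]
      = fun ω => bh (X ω) :=
    condExp_of_stronglyMeasurable hX.comap_le (hbh.comp hXm).stronglyMeasurable hbhX
  have hcond : μ[Y - fun ω => bh (X ω) | MeasurableSpace.comap X inferInstance]
      =ᵐ[μ] fun ω => b (X ω) - bh (X ω) := by
    filter_upwards [condExp_sub hY hbhX (MeasurableSpace.comap X inferInstance), hbX]
      with ω hsub hb
    rw [hsub, Pi.sub_apply, hbh_cond, hb]
  calc ∫ ω, (Y ω - bh (X ω)) * g (X ω) ∂μ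
      = ∫ ω, μ[Y - fun ω => bh (X ω) | MeasurableSpace.comap X inferInstance] ω * g (X ω) ∂μ :=
        integral_mul_eq_integral_condExp_mul hX.comap_le (hY.sub hbhX)
          (hg.comp hXm).stronglyMeasurable (ae_of_all _ fun ω => (hgD (X ω) : _))
    _ = ∫ ω, (b (X ω) - bh (X ω)) * g (X ω) ∂μ :=
        integral_congr_ae (hcond.mono fun ω hω => congrArg (· * g (X ω)) hω)

end Tower

theorem stmt4_general {Ω S : Type*} [MeasurableSpace Ω] [MeasurableSpace S]
    (P : Measure Ω) [IsProbabilityMeasure P]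
    (X : Ω → S) (hX : Measurable X)
    (Y A : Ω → ℝ) (hY : Measurable Y) (hA : Measurable A)
    (C : ℝ) (hYb : ∀ ω, |Y ω| ≤ C) (hAb : ∀ ω, |A ω| ≤ C)
    (b p bh ph : S → ℝ)
    (hbh : Measurable bh) (hph : Measurable ph)
    (hbhB : ∀ s, |bh s| ≤ C) (hphB : ∀ s, |ph s| ≤ C)
    (hbX : (fun ω => b (X ω)) =ᵐ[P] P[Y | MeasurableSpace.comap X inferInstance])
    (hpX : (fun ω => p (X ω)) =ᵐ[P] P[A | MeasurableSpace.comap X inferInstance])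
    {k : ℕ} (z : S → Fin k → ℝ) (hz : ∀ j, Measurable fun s => z s j)
    (hzB : ∀ s j, |z s j| ≤ C)
    (G : Matrix (Fin k) (Fin k) ℝ)
    (n : ℕ) (hn : 2 ≤ n) :
    (∫ ω : Fin n → Ω,
        ((n : ℝ) * ((n : ℝ) - 1))⁻¹ *
          ∑ i₁ : Fin n, ∑ i₂ : Fin n,
            (if i₁ = i₂ then 0 else
              (Y (ω i₁) - bh (X (ω i₁))) *
                (∑ a, ∑ c, z (X (ω i₁)) a * G⁻¹ a c * z (X (ω i₂)) c) *
                (A (ω i₂) - ph (X (ω i₂))))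
        ∂(Measure.pi fun _ : Fin n => P))
      = ∑ a, ∑ c, (∫ ω, (b (X ω) - bh (X ω)) * z (X ω) a ∂P) * G⁻¹ a c *
          (∫ ω, z (X ω) c * (p (X ω) - ph (X ω)) ∂P) := by
  have hbdd : ∀ {f : Ω → ℝ}, Measurable f → (∀ ω, |f ω| ≤ C) → Integrable f P :=
    fun hf hfC => .of_bound hf.aestronglyMeasurable C (ae_of_all _ hfC)
  have hbhX := hbdd (hbh.comp hX) fun ω => hbhB (X ω)
  have hphX := hbdd (hph.comp hX) fun ω => hphB (X ω)
  set F : Fin k → Ω → ℝ := fun a x => (Y x - bh (X x)) * z (X x) a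
  set H : Fin k → Ω → ℝ := fun c y => z (X y) c * (A y - ph (X y))
  have hF : ∀ a, Integrable (F a) P := fun a =>
    ((hbdd hY hYb).sub hbhX).mul_bdd ((hz a).comp hX).aestronglyMeasurable
      (ae_of_all _ fun ω => hzB (X ω) a)
  have hH : ∀ c, Integrable (H c) P := fun c =>
    ((hbdd hA hAb).sub hphX).bdd_mul ((hz c).comp hX).aestronglyMeasurable
      (ae_of_all _ fun ω => hzB (X ω) c)
  have hFint : ∀ a, ∫ ω, F a ω ∂P = ∫ ω, (b (X ω) - bh (X ω)) * z (X ω) a ∂P := fun a =>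
    integral_sub_comp_mul_comp_eq_of_condExp hX (hbdd hY hYb) hbh hbhX (hz a)
      (fun s => hzB s a) hbX
  have hHint : ∀ c, ∫ ω, H c ω ∂P = ∫ ω, z (X ω) c * (p (X ω) - ph (X ω)) ∂P := by
    intro c
    simp only [H, mul_comm (z _ c)]
    exact integral_sub_comp_mul_comp_eq_of_condExp hX (hbdd hA hAb) hph hphX (hz c)
      (fun s => hzB s c) hpX
  have hkernel : ∀ x y, (Y x - bh (X x)) * (∑ a, ∑ c, z (X x) a * G⁻¹ a c * z (X y) c) *
      (A y - ph (X y)) = ∑ a, ∑ c, F a x * G⁻¹ a c * H c y := by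
    intro x y
    simp only [F, H, mul_sum, sum_mul]
    exact sum_congr rfl fun a _ => sum_congr rfl fun c _ => by ring
  calc _ = ∫ q : Ω × Ω, ∑ a, ∑ c, F a q.1 * G⁻¹ a c * H c q.2 ∂(P.prod P) := by
        simp_rw [hkernel]
        exact integral_uStatistic_pi (K := fun x y => ∑ a, ∑ c, F a x * G⁻¹ a c * H c y) P hn
          (integrable_prod_bilin hF hH G⁻¹)
    _ = _ := by
        rw [integral_prod_bilin hF hH]
        simp_rw [hFint, hHint]

/-- Unbiasedness of the second-order influence function statistic (Theorem `thm:soif`(i)):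
over `n ≥ 2` i.i.d. copies (modelled by the product measure on `Fin n → Ω`),
`E[ÎF₂₂] = E[(b(X) - b̂(X)) z̄(X)ᵀ] Ω⁻¹ E[z̄(X) (p(X) - p̂(X))]`, the projected bias. -/
theorem stmt4 {Ω S : Type*} [MeasurableSpace Ω] [MeasurableSpace S]
    (P : Measure Ω) [IsProbabilityMeasure P]
    (X : Ω → S) (hX : Measurable X)
    (Y A : Ω → ℝ) (hY : Measurable Y) (hA : Measurable A)
    (C : ℝ) (hYb : ∀ ω, |Y ω| ≤ C) (hAb : ∀ ω, |A ω| ≤ C)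
    (b p bh ph : S → ℝ) (hb : Measurable b) (hp : Measurable p)
    (hbh : Measurable bh) (hph : Measurable ph)
    (hbhB : ∀ s, |bh s| ≤ C) (hphB : ∀ s, |ph s| ≤ C)
    (hbX : (fun ω => b (X ω)) =ᵐ[P] P[Y | MeasurableSpace.comap X inferInstance])
    (hpX : (fun ω => p (X ω)) =ᵐ[P] P[A | MeasurableSpace.comap X inferInstance])
    {k : ℕ} (z : S → Fin k → ℝ) (hz : ∀ j, Measurable fun s => z s j)
    (hzB : ∀ s j, |z s j| ≤ C)
    (G : Matrix (Fin k) (Fin k) ℝ)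
    (hG : ∀ i j, G i j = ∫ ω, z (X ω) i * z (X ω) j ∂P)
    (hGinv : IsUnit G)
    (n : ℕ) (hn : 2 ≤ n) :
    (∫ ω : Fin n → Ω,
        ((n : ℝ) * ((n : ℝ) - 1))⁻¹ *
          ∑ i₁ : Fin n, ∑ i₂ : Fin n,
            (if i₁ = i₂ then 0 else
              (Y (ω i₁) - bh (X (ω i₁))) *
                (∑ a, ∑ c, z (X (ω i₁)) a * G⁻¹ a c * z (X (ω i₂)) c) *
                (A (ω i₂) - ph (X (ω i₂))))
        ∂(Measure.pi fun _ : Fin n => P))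
      = ∑ a, ∑ c, (∫ ω, (b (X ω) - bh (X ω)) * z (X ω) a ∂P) * G⁻¹ a c *
          (∫ ω, z (X ω) c * (p (X ω) - ph (X ω)) ∂P) :=
  stmt4_general P X hX Y A hY hA C hYb hAb b p bh ph hbh hph hbhB hphB hbX hpX z hz hzB G n hn
end

section
/- In the setting of the second-order influence function statistic (X random element of S; Y, A bounded real random variables; b(X), p(X) versions of E[Y | σ(X)], E[A | σ(X)]; b̂, p̂, z̄ bounded measurable; Ω = E[z̄(X) z̄(X)ᵀ] invertible; O₁, …, Oₙ i.i.d. copies, n ≥ 2), define ψ̂₁ := (1/n) Σᵢ (Yᵢ − b̂(Xᵢ))(Aᵢ − p̂(Xᵢ)) and ψ̂₂ := ψ̂₁ − ÎF₂₂, where ÎF₂₂ := (1/(n(n−1))) Σ_{i₁ ≠ i₂} (Y_{i₁} − b̂(X_{i₁})) z̄(X_{i₁})ᵀ Ω⁻¹ z̄(X_{i₂}) (A_{i₂} − p̂(X_{i₂})). Then E[ψ̂₂] = E[(Y − b(X))(A − p(X))] + ⟨(I − Π)(b − b̂), (I − Π)(p − p̂)⟩, where Π is the orthogonal projection in L²(law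 of X) onto the span of z₁, …, z_k. That is, the bias of ψ̂₂ for ψ = E[cov(Y, A | X)] equals exactly the truncation bias cTB_{θ,k}(ψ̂₁). -/
/-!
Write `u = Y - b̂(X)` and `v = A - p̂(X)`. By independence of the sample, the diagonal terms of
`ψ̂₂` have mean `E[u v]` and every off-diagonal term of `ÎF₂₂` has mean
`∑ a c, E[u z_a] (G⁻¹)_{ac} E[z_c v]`. The residuals `Y - b(X)` and `A - p(X)` are orthogonal
to every square-integrable function of `X`, so in `L²(law of X)` these means are
`E[u v] = ψ + ⟪b - b̂, p - p̂⟫`, `E[u z_a] = ⟪b - b̂, z_a⟫` and `E[z_c v] = ⟪z_c, p - p̂⟫`.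
Finally the normal equations give `Π g = ∑ a c, (G⁻¹)_{ac} ⟪z_c, g⟫ z_a`, so the double sum
is `⟪f, Π g⟫ = ⟪f, g⟫ - ⟪f - Π f, g - Π g⟫` for `f = b - b̂`, `g = p - p̂`.
-/

open MeasureTheory ProbabilityTheory Finset
open scoped RealInnerProductSpace

section Sample

variable {Ω ι : Type*} [MeasurableSpace Ω] [Fintype ι] {P : Measure Ω} [IsProbabilityMeasure P]

theorem measurePreserving_eval_prodMk {i j : ι} (hij : i ≠ j) :
    MeasurePreserving (fun ω : ι → Ω => (ω i, ω j)) (Measure.pi fun _ => P) (P.prod P) := by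
  have hind : IndepFun (fun ω : ι → Ω => ω i) (fun ω => ω j) (Measure.pi fun _ => P) :=
    (iIndepFun_pi (X := fun _ => id) fun _ => aemeasurable_id).indepFun hij
  refine ⟨by fun_prop, ?_⟩
  rw [hind.map_prod_eq_prod_map_map (measurable_pi_apply i).aemeasurable
    (measurable_pi_apply j).aemeasurable,
    (measurePreserving_eval _ i).map_eq, (measurePreserving_eval _ j).map_eq]

theorem integral_sum_comp_eval {f : Ω → ℝ} (hf : Integrable f P) :
    ∫ ω, ∑ i, f (ω i) ∂Measure.pi (fun _ : ι => P) = Fintype.card ι * ∫ x, f x ∂P := by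
  rw [integral_finsetSum _ fun i _ => integrable_comp_eval hf]
  simp [integral_comp_eval (μ := fun _ : ι => P) hf.1]

variable [DecidableEq ι] {H : Ω → Ω → ℝ}

theorem integrable_ite_comp_eval_prodMk (hH : Integrable (Function.uncurry H) (P.prod P))
    (i j : ι) :
    Integrable (fun ω : ι → Ω => if i = j then 0 else H (ω i) (ω j)) (Measure.pi fun _ => P) := by
  split_ifs with hij
  · exact integrable_zero _ _ _
  · exact (measurePreserving_eval_prodMk hij).integrable_comp_of_integrable hH

theorem integral_ite_comp_eval_prodMk (hH : AEStronglyMeasurable (Function.uncurry H) (P.prod P))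
    (i j : ι) :
    ∫ ω, (if i = j then 0 else H (ω i) (ω j)) ∂Measure.pi (fun _ : ι => P)
      = if i = j then 0 else ∫ x, H x.1 x.2 ∂P.prod P := by
  split_ifs with hij
  · exact integral_zero _ _
  · have hmp := measurePreserving_eval_prodMk (P := P) hij
    rw [← hmp.map_eq, integral_map hmp.measurable.aemeasurable (hmp.map_eq ▸ hH)]

theorem integrable_sum_offDiag_comp_eval (hH : Integrable (Function.uncurry H) (P.prod P)) :
    Integrable (fun ω : ι → Ω => ∑ i, ∑ j, if i = j then 0 else H (ω i) (ω j))
      (Measure.pi fun _ => P) :=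
  integrable_finsetSum _ fun i _ =>
    integrable_finsetSum _ fun j _ => integrable_ite_comp_eval_prodMk hH i j

theorem integral_sum_offDiag_comp_eval (hH : Integrable (Function.uncurry H) (P.prod P)) :
    ∫ ω, ∑ i, ∑ j, (if i = j then 0 else H (ω i) (ω j)) ∂Measure.pi (fun _ : ι => P)
      = Fintype.card ι * (Fintype.card ι - 1) * ∫ x, H x.1 x.2 ∂P.prod P := by
  have hcard (i : ι) : (#{j | ¬i = j} : ℝ) = Fintype.card ι - 1 := by
    simp [filter_ne, Nat.cast_sub (Fintype.card_pos_iff.2 ⟨i⟩)]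
  rw [integral_finsetSum _ fun i _ => integrable_finsetSum _ fun j _ =>
    integrable_ite_comp_eval_prodMk hH i j]
  simp_rw [integral_finsetSum _ fun j _ => integrable_ite_comp_eval_prodMk hH _ j,
    integral_ite_comp_eval_prodMk hH.1]
  simp only [Finset.sum_ite, sum_const_zero, sum_const, zero_add, nsmul_eq_mul, hcard, card_univ]
  ring

end Sample

section BilinearKernel

variable {α β κ : Type*} [MeasurableSpace α] [MeasurableSpace β] [Fintype κ]
  {μ : Measure α} {ν : Measure β} {u : α → ℝ} {v : β → ℝ} {φ : α → κ → ℝ} {ψ : β → κ → ℝ}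

omit [MeasurableSpace α] [MeasurableSpace β] in
theorem mul_sum_sum_mul_eq (M : κ → κ → ℝ) (x : α) (y : β) :
    u x * (∑ a, ∑ c, φ x a * M a c * ψ y c) * v y
      = ∑ a, ∑ c, M a c * ((u x * φ x a) * (ψ y c * v y)) := by
  simp only [mul_sum, sum_mul]
  exact sum_congr rfl fun a _ => sum_congr rfl fun c _ => by ring

variable (M : κ → κ → ℝ) (huφ : ∀ a, Integrable (fun x => u x * φ x a) μ)
  (hψv : ∀ c, Integrable (fun y => ψ y c * v y) ν)
include huφ hψv

theorem integrable_prod_mul_sum_sum_mul :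
    Integrable (fun p : α × β => u p.1 * (∑ a, ∑ c, φ p.1 a * M a c * ψ p.2 c) * v p.2)
      (μ.prod ν) := by
  simp_rw [mul_sum_sum_mul_eq]
  exact integrable_finsetSum _ fun a _ => integrable_finsetSum _ fun c _ =>
    ((huφ a).mul_prod (hψv c)).const_mul _

theorem integral_prod_mul_sum_sum_mul [SFinite μ] [SFinite ν] :
    ∫ p, u p.1 * (∑ a, ∑ c, φ p.1 a * M a c * ψ p.2 c) * v p.2 ∂μ.prod ν
      = ∑ a, ∑ c, (∫ x, u x * φ x a ∂μ) * M a c * ∫ y, ψ y c * v y ∂ν := by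
  simp_rw [mul_sum_sum_mul_eq]
  rw [integral_finsetSum _ fun a _ => integrable_finsetSum _ fun c _ =>
    ((huφ a).mul_prod (hψv c)).const_mul _]
  refine sum_congr rfl fun a _ => ?_
  rw [integral_finsetSum _ fun c _ => ((huφ a).mul_prod (hψv c)).const_mul _]
  refine sum_congr rfl fun c _ => ?_
  rw [integral_const_mul, integral_prod_mul (fun x => u x * φ x a) (fun y => ψ y c * v y)]
  ring

end BilinearKernel

theorem integral_pi_sampleMean_sub_uStatistic {Ω κ : Type*} [MeasurableSpace Ω] [Fintype κ]
    {P : Measure Ω} [IsProbabilityMeasure P] {n : ℕ} (hn : 2 ≤ n)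
    {u v : Ω → ℝ} {φ : Ω → κ → ℝ} (M : κ → κ → ℝ)
    (huv : Integrable (fun x => u x * v x) P) (huφ : ∀ a, Integrable (fun x => u x * φ x a) P)
    (hφv : ∀ c, Integrable (fun x => φ x c * v x) P) :
    ∫ ω : Fin n → Ω, ((n : ℝ)⁻¹ * ∑ i, u (ω i) * v (ω i)
        - ((n : ℝ) * ((n : ℝ) - 1))⁻¹ * ∑ i₁, ∑ i₂,
          (if i₁ = i₂ then 0 else
            u (ω i₁) * (∑ a, ∑ c, φ (ω i₁) a * M a c * φ (ω i₂) c) * v (ω i₂)))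
        ∂Measure.pi (fun _ => P)
      = ∫ x, u x * v x ∂P - ∑ a, ∑ c, (∫ x, u x * φ x a ∂P) * M a c * ∫ x, φ x c * v x ∂P := by
  have hH : Integrable
      (Function.uncurry fun x y => u x * (∑ a, ∑ c, φ x a * M a c * φ y c) * v y) (P.prod P) :=
    integrable_prod_mul_sum_sum_mul M huφ hφv
  have hn0 : (n : ℝ) ≠ 0 := by positivity
  have hn1 : (n : ℝ) - 1 ≠ 0 := by
    have : (2 : ℝ) ≤ n := by exact_mod_cast hn
    linarith
  have hmean : Integrable (fun ω : Fin n → Ω => (n : ℝ)⁻¹ * ∑ i, u (ω i) * v (ω i))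
      (Measure.pi fun _ => P) :=
    (integrable_finsetSum _ fun i _ => integrable_comp_eval (μ := fun _ => P) huv).const_mul _
  rw [integral_sub hmean ((integrable_sum_offDiag_comp_eval hH).const_mul _),
    integral_const_mul, integral_const_mul, integral_sum_comp_eval huv,
    integral_sum_offDiag_comp_eval hH, integral_prod_mul_sum_sum_mul M huφ hφv]
  simp only [Fintype.card_fin]
  field_simp

section Residual

variable {Ω S : Type*} {m : MeasurableSpace Ω} [mΩ : MeasurableSpace Ω] [MeasurableSpace S]
  {μ : Measure Ω}

theorem inner_toLp_eq_integral_comp {X : Ω → S} (hX : AEMeasurable X μ) {f g : S → ℝ}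
    (hf : MemLp f 2 (μ.map X)) (hg : MemLp g 2 (μ.map X)) :
    ⟪hf.toLp f, hg.toLp g⟫ = ∫ ω, f (X ω) * g (X ω) ∂μ := by
  rw [L2.inner_def]
  calc ∫ s, ⟪hf.toLp f s, hg.toLp g s⟫ ∂μ.map X = ∫ s, f s * g s ∂μ.map X := by
        refine integral_congr_ae ?_
        filter_upwards [hf.coeFn_toLp, hg.coeFn_toLp] with s hfs hgs
        rw [hfs, hgs, real_inner_eq_re_inner, RCLike.inner_apply]
        simp [mul_comm]
    _ = ∫ ω, f (X ω) * g (X ω) ∂μ := integral_map hX (hf.1.mul hg.1)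

variable {X : Ω → S} {W : Ω → ℝ} {w : S → ℝ}

theorem memLp_sub_comp_of_ae_eq_condExp (hW : MemLp W 2 μ)
    (hw : (fun ω => w (X ω)) =ᵐ[μ] μ[W|MeasurableSpace.comap X inferInstance]) :
    MemLp (fun ω => W ω - w (X ω)) 2 μ :=
  (hW.sub (hW.condExp (m := MeasurableSpace.comap X inferInstance) one_le_two)).ae_eq
    (hw.mono fun ω hω => by simp [hω])

theorem memLp_sub_comp_of_memLp_map (hX : AEMeasurable X μ) (hW : MemLp W 2 μ)
    (hw : (fun ω => w (X ω)) =ᵐ[μ] μ[W|MeasurableSpace.comap X inferInstance]) {ŵ : S → ℝ}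
    (hd : MemLp (fun s => w s - ŵ s) 2 (μ.map X)) :
    MemLp (fun ω => W ω - ŵ (X ω)) 2 μ := by
  convert (memLp_sub_comp_of_ae_eq_condExp hW hw).add (hd.comp_of_map hX) using 1
  ext ω
  simp

variable [IsFiniteMeasure μ]

theorem integral_sub_condExp_mul_eq_zero (hm : m ≤ mΩ) {f g : Ω → ℝ} (hf : MemLp f 2 μ)
    (hg : MemLp g 2 μ) (hgm : AEStronglyMeasurable[m] g μ) :
    ∫ ω, (f ω - μ[f|m] ω) * g ω ∂μ = 0 := by
  have hgf : Integrable (g * f) μ := hg.integrable_mul hf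
  have hcondExp : Integrable (μ[f|m] * g) μ := (hf.condExp one_le_two).integrable_mul hg
  have hpull : μ[g * f|m] =ᵐ[μ] g * μ[f|m] :=
    condExp_mul_of_aestronglyMeasurable_left hgm hgf (hf.integrable one_le_two)
  calc ∫ ω, (f ω - μ[f|m] ω) * g ω ∂μ = ∫ ω, (g * f) ω ∂μ - ∫ ω, (μ[f|m] * g) ω ∂μ := by
        rw [← integral_sub hgf hcondExp]
        congr 1 with ω
        simp only [Pi.mul_apply]
        ring
    _ = 0 := by
        rw [← integral_condExp hm, integral_congr_ae hpull, sub_eq_zero]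
        simp only [Pi.mul_apply, mul_comm]

theorem integral_sub_comp_mul_comp_eq_zero (hX : Measurable X) (hW : MemLp W 2 μ)
    (hw : (fun ω => w (X ω)) =ᵐ[μ] μ[W|MeasurableSpace.comap X inferInstance])
    {h : S → ℝ} (hh : MemLp h 2 (μ.map X)) :
    ∫ ω, (W ω - w (X ω)) * h (X ω) ∂μ = 0 := by
  obtain ⟨h', h'm, hh'⟩ := hh.1
  have hhX : AEStronglyMeasurable[MeasurableSpace.comap X inferInstance] (fun ω => h (X ω)) μ :=
    ⟨fun ω => h' (X ω), h'm.comp_measurable (comap_measurable X),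
      ae_of_ae_map hX.aemeasurable hh'⟩
  rw [← integral_sub_condExp_mul_eq_zero hX.comap_le hW (hh.comp_of_map hX.aemeasurable) hhX]
  refine integral_congr_ae ?_
  filter_upwards [hw] with ω hω
  rw [hω]
  rfl

theorem integral_sub_comp_mul_comp_eq_inner (hX : Measurable X) (hW : MemLp W 2 μ)
    (hw : (fun ω => w (X ω)) =ᵐ[μ] μ[W|MeasurableSpace.comap X inferInstance]) {ŵ h : S → ℝ}
    (hd : MemLp (fun s => w s - ŵ s) 2 (μ.map X)) (hh : MemLp h 2 (μ.map X)) :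
    ∫ ω, (W ω - ŵ (X ω)) * h (X ω) ∂μ = ⟪hd.toLp _, hh.toLp h⟫ := by
  have hhX := hh.comp_of_map hX.aemeasurable
  have hres : Integrable (fun ω => (W ω - w (X ω)) * h (X ω)) μ :=
    (memLp_sub_comp_of_ae_eq_condExp hW hw).integrable_mul hhX
  have hdiff : Integrable (fun ω => (w (X ω) - ŵ (X ω)) * h (X ω)) μ :=
    (hd.comp_of_map hX.aemeasurable).integrable_mul hhX
  calc ∫ ω, (W ω - ŵ (X ω)) * h (X ω) ∂μ
      = ∫ ω, (W ω - w (X ω)) * h (X ω) ∂μ + ∫ ω, (w (X ω) - ŵ (X ω)) * h (X ω) ∂μ := by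
        rw [← integral_add hres hdiff]
        congr 1 with ω
        ring
    _ = ⟪hd.toLp _, hh.toLp h⟫ := by
        rw [integral_sub_comp_mul_comp_eq_zero hX hW hw hh, zero_add,
          inner_toLp_eq_integral_comp hX.aemeasurable]

theorem integral_sub_comp_mul_sub_comp_eq_add_inner (hX : Measurable X) {W₁ W₂ : Ω → ℝ}
    {w₁ w₂ ŵ₁ ŵ₂ : S → ℝ} (hW₁ : MemLp W₁ 2 μ) (hW₂ : MemLp W₂ 2 μ)
    (hw₁ : (fun ω => w₁ (X ω)) =ᵐ[μ] μ[W₁|MeasurableSpace.comap X inferInstance])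
    (hw₂ : (fun ω => w₂ (X ω)) =ᵐ[μ] μ[W₂|MeasurableSpace.comap X inferInstance])
    (hd₁ : MemLp (fun s => w₁ s - ŵ₁ s) 2 (μ.map X))
    (hd₂ : MemLp (fun s => w₂ s - ŵ₂ s) 2 (μ.map X)) :
    ∫ ω, (W₁ ω - ŵ₁ (X ω)) * (W₂ ω - ŵ₂ (X ω)) ∂μ
      = ∫ ω, (W₁ ω - w₁ (X ω)) * (W₂ ω - w₂ (X ω)) ∂μ + ⟪hd₁.toLp _, hd₂.toLp _⟫ := by
  have hr₁ := memLp_sub_comp_of_ae_eq_condExp hW₁ hw₁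
  have hcross : Integrable (fun ω => (W₁ ω - w₁ (X ω)) * (w₂ (X ω) - ŵ₂ (X ω))) μ :=
    hr₁.integrable_mul (hd₂.comp_of_map hX.aemeasurable)
  have hresid : Integrable (fun ω => (W₁ ω - w₁ (X ω)) * (W₂ ω - w₂ (X ω))) μ :=
    hr₁.integrable_mul (memLp_sub_comp_of_ae_eq_condExp hW₂ hw₂)
  have hbias : Integrable (fun ω => (W₂ ω - ŵ₂ (X ω)) * (w₁ (X ω) - ŵ₁ (X ω))) μ :=
    (memLp_sub_comp_of_memLp_map hX.aemeasurable hW₂ hw₂ hd₂).integrable_mul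
      (hd₁.comp_of_map hX.aemeasurable)
  calc ∫ ω, (W₁ ω - ŵ₁ (X ω)) * (W₂ ω - ŵ₂ (X ω)) ∂μ
      = ∫ ω, (W₁ ω - w₁ (X ω)) * (W₂ ω - w₂ (X ω)) ∂μ
        + ∫ ω, (W₁ ω - w₁ (X ω)) * (w₂ (X ω) - ŵ₂ (X ω)) ∂μ
        + ∫ ω, (W₂ ω - ŵ₂ (X ω)) * (w₁ (X ω) - ŵ₁ (X ω)) ∂μ := by
        rw [← integral_add hresid hcross, ← integral_add _ hbias]
        · congr 1 with ω
          ring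
        · exact hresid.add hcross
    _ = _ := by
        rw [integral_sub_comp_mul_comp_eq_zero hX hW₁ hw₁ hd₂,
          integral_sub_comp_mul_comp_eq_inner hX hW₂ hw₂ hd₂ hd₁, real_inner_comm, add_zero]

end Residual

section Gram

open scoped Matrix

variable {E κ : Type*} [NormedAddCommGroup E] [InnerProductSpace ℝ E] [Fintype κ] [DecidableEq κ]
  {z : κ → E} {G : Matrix κ κ ℝ} (K : Submodule ℝ E) [K.HasOrthogonalProjection]

theorem Submodule.inner_sub_starProjection_sub_starProjection (f g : E) :
    ⟪f - K.starProjection f, g - K.starProjection g⟫ = ⟪f, g⟫ - ⟪f, K.starProjection g⟫ := by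
  have horth : ⟪K.starProjection f, g - K.starProjection g⟫ = 0 := by
    rw [real_inner_comm]
    exact K.starProjection_inner_eq_zero g _ (K.starProjection_apply_mem f)
  rw [inner_sub_left, horth, sub_zero, inner_sub_right]

theorem Submodule.starProjection_eq_sum_of_gram (hG : ∀ a c, G a c = ⟪z a, z c⟫)
    (hGinv : IsUnit G) (hK : K = Submodule.span ℝ (Set.range z)) (g : E) :
    K.starProjection g = ∑ a, (G⁻¹ *ᵥ fun c => ⟪z c, g⟫) a • z a := by
  refine K.eq_starProjection_of_mem_of_inner_eq_zero ?_ fun x hx => ?_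
  · rw [hK]
    exact Submodule.sum_mem _ fun a _ =>
      Submodule.smul_mem _ _ (Submodule.subset_span (Set.mem_range_self a))
  rw [hK] at hx
  induction hx using Submodule.span_induction with
  | mem x hx =>
    obtain ⟨i, rfl⟩ := hx
    have hsymm (a : κ) : G a i = G i a := by rw [hG, hG, real_inner_comm]
    have hnormal : ∑ a, (G⁻¹ *ᵥ fun c => ⟪z c, g⟫) a * G a i = ⟪z i, g⟫ := by
      calc ∑ a, (G⁻¹ *ᵥ fun c => ⟪z c, g⟫) a * G a i
          = (G *ᵥ (G⁻¹ *ᵥ fun c => ⟪z c, g⟫)) i := by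
            simp only [Matrix.mulVec, dotProduct, hsymm, mul_comm]
        _ = ⟪z i, g⟫ := by
            rw [Matrix.mulVec_mulVec,
              Matrix.mul_nonsing_inv _ ((Matrix.isUnit_iff_isUnit_det G).1 hGinv),
              Matrix.one_mulVec]
    rw [inner_sub_left, sum_inner]
    simp only [real_inner_smul_left, ← hG]
    rw [hnormal, real_inner_comm, sub_self]
  | zero => simp
  | add x y _ _ hx hy => rw [inner_add_right, hx, hy, add_zero]
  | smul a x _ hx => rw [real_inner_smul_right, hx, mul_zero]

theorem Submodule.inner_sub_starProjection_sub_starProjection_of_gram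
    (hG : ∀ a c, G a c = ⟪z a, z c⟫) (hGinv : IsUnit G)
    (hK : K = Submodule.span ℝ (Set.range z)) (f g : E) :
    ⟪f - K.starProjection f, g - K.starProjection g⟫
      = ⟪f, g⟫ - ∑ a, ∑ c, ⟪f, z a⟫ * G⁻¹ a c * ⟪z c, g⟫ := by
  rw [K.inner_sub_starProjection_sub_starProjection, K.starProjection_eq_sum_of_gram hG hGinv hK,
    inner_sum]
  refine congrArg _ (sum_congr rfl fun a _ => ?_)
  rw [real_inner_smul_right, Matrix.mulVec, dotProduct, sum_mul]
  exact sum_congr rfl fun c _ => by ring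

end Gram

theorem stmt5_general {Ω S : Type*} [MeasurableSpace Ω] [MeasurableSpace S]
    (P : Measure Ω) [IsProbabilityMeasure P]
    (X : Ω → S) (hX : Measurable X)
    (Y A : Ω → ℝ) (hY : Measurable Y) (hA : Measurable A)
    (C : ℝ) (hYb : ∀ ω, |Y ω| ≤ C) (hAb : ∀ ω, |A ω| ≤ C)
    (b p bh ph : S → ℝ)
    (hbX : (fun ω => b (X ω)) =ᵐ[P] P[Y | MeasurableSpace.comap X inferInstance])
    (hpX : (fun ω => p (X ω)) =ᵐ[P] P[A | MeasurableSpace.comap X inferInstance])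
    {k : ℕ} (z : S → Fin k → ℝ)
    (G : Matrix (Fin k) (Fin k) ℝ)
    (hG : ∀ i j, G i j = ∫ ω, z (X ω) i * z (X ω) j ∂P)
    (hGinv : IsUnit G)
    (hfb : MemLp (fun s => b s - bh s) 2 (P.map X))
    (hfp : MemLp (fun s => p s - ph s) 2 (P.map X))
    (hzL : ∀ j, MemLp (fun s => z s j) 2 (P.map X))
    (K : Submodule ℝ (Lp ℝ 2 (P.map X)))
    (hK : K = Submodule.span ℝ (Set.range fun j : Fin k => MemLp.toLp _ (hzL j)))
    [K.HasOrthogonalProjection]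
    (n : ℕ) (hn : 2 ≤ n) :
    (∫ ω : Fin n → Ω,
        ((n : ℝ)⁻¹ * ∑ i : Fin n, (Y (ω i) - bh (X (ω i))) * (A (ω i) - ph (X (ω i)))
          - ((n : ℝ) * ((n : ℝ) - 1))⁻¹ *
              ∑ i₁ : Fin n, ∑ i₂ : Fin n,
                (if i₁ = i₂ then 0 else
                  (Y (ω i₁) - bh (X (ω i₁))) *
                    (∑ a, ∑ c, z (X (ω i₁)) a * G⁻¹ a c * z (X (ω i₂)) c) *
                    (A (ω i₂) - ph (X (ω i₂)))))
        ∂(Measure.pi fun _ : Fin n => P))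
      = (∫ ω, (Y ω - b (X ω)) * (A ω - p (X ω)) ∂P)
        + ⟪MemLp.toLp _ hfb - (K.orthogonalProjectionOnto (MemLp.toLp _ hfb) : Lp ℝ 2 (P.map X)),
            MemLp.toLp _ hfp - (K.orthogonalProjectionOnto (MemLp.toLp _ hfp) : Lp ℝ 2 (P.map X))⟫ := by
  have hY2 : MemLp Y 2 P := MemLp.of_bound hY.aestronglyMeasurable C (ae_of_all _ hYb)
  have hA2 : MemLp A 2 P := MemLp.of_bound hA.aestronglyMeasurable C (ae_of_all _ hAb)
  have hu := memLp_sub_comp_of_memLp_map hX.aemeasurable hY2 hbX hfb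
  have hv := memLp_sub_comp_of_memLp_map hX.aemeasurable hA2 hpX hfp
  have hzX (a : Fin k) : MemLp (fun ω => z (X ω) a) 2 P := (hzL a).comp_of_map hX.aemeasurable
  have hGram (a c : Fin k) : G a c = ⟪(hzL a).toLp _, (hzL c).toLp _⟫ := by
    rw [hG, inner_toLp_eq_integral_comp hX.aemeasurable]
  have huz (a : Fin k) : ∫ ω, (Y ω - bh (X ω)) * z (X ω) a ∂P
      = ⟪hfb.toLp _, (hzL a).toLp _⟫ :=
    integral_sub_comp_mul_comp_eq_inner hX hY2 hbX hfb (hzL a)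
  have hzv (c : Fin k) : ∫ ω, z (X ω) c * (A ω - ph (X ω)) ∂P
      = ⟪(hzL c).toLp _, hfp.toLp _⟫ := by
    rw [real_inner_comm, ← integral_sub_comp_mul_comp_eq_inner hX hA2 hpX hfp (hzL c)]
    exact integral_congr_ae (ae_of_all _ fun ω => mul_comm _ _)
  refine (integral_pi_sampleMean_sub_uStatistic hn (fun a c => G⁻¹ a c) (hu.integrable_mul hv)
    (fun a => hu.integrable_mul (hzX a)) (fun c => (hzX c).integrable_mul hv)).trans ?_
  simp only [Submodule.coe_orthogonalProjectionOnto_apply, huz, hzv,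
    K.inner_sub_starProjection_sub_starProjection_of_gram hGram hGinv hK,
    integral_sub_comp_mul_sub_comp_eq_add_inner hX hY2 hA2 hbX hpX hfb hfp]
  ring

/-- Equation `eq:psi2` of the paper: the bias-corrected estimator `ψ̂₂ = ψ̂₁ - ÎF₂₂` has mean
`ψ + ⟨(I-Π)(b-b̂), (I-Π)(p-p̂)⟩`, where `Π` is the orthogonal projection in `L²(law of X)` onto
the span of the basis functions `z₁, …, z_k`; i.e. its bias equals the truncation bias. -/
theorem stmt5 {Ω S : Type*} [MeasurableSpace Ω] [MeasurableSpace S]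
    (P : Measure Ω) [IsProbabilityMeasure P]
    (X : Ω → S) (hX : Measurable X)
    (Y A : Ω → ℝ) (hY : Measurable Y) (hA : Measurable A)
    (C : ℝ) (hYb : ∀ ω, |Y ω| ≤ C) (hAb : ∀ ω, |A ω| ≤ C)
    (b p bh ph : S → ℝ) (hb : Measurable b) (hp : Measurable p)
    (hbh : Measurable bh) (hph : Measurable ph)
    (hbhB : ∀ s, |bh s| ≤ C) (hphB : ∀ s, |ph s| ≤ C)
    (hbX : (fun ω => b (X ω)) =ᵐ[P] P[Y | MeasurableSpace.comap X inferInstance])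
    (hpX : (fun ω => p (X ω)) =ᵐ[P] P[A | MeasurableSpace.comap X inferInstance])
    {k : ℕ} (z : S → Fin k → ℝ) (hz : ∀ j, Measurable fun s => z s j)
    (hzB : ∀ s j, |z s j| ≤ C)
    (G : Matrix (Fin k) (Fin k) ℝ)
    (hG : ∀ i j, G i j = ∫ ω, z (X ω) i * z (X ω) j ∂P)
    (hGinv : IsUnit G)
    (hfb : MemLp (fun s => b s - bh s) 2 (P.map X))
    (hfp : MemLp (fun s => p s - ph s) 2 (P.map X))
    (hzL : ∀ j, MemLp (fun s => z s j) 2 (P.map X))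
    (K : Submodule ℝ (Lp ℝ 2 (P.map X)))
    (hK : K = Submodule.span ℝ (Set.range fun j : Fin k => MemLp.toLp _ (hzL j)))
    [K.HasOrthogonalProjection]
    (n : ℕ) (hn : 2 ≤ n) :
    (∫ ω : Fin n → Ω,
        ((n : ℝ)⁻¹ * ∑ i : Fin n, (Y (ω i) - bh (X (ω i))) * (A (ω i) - ph (X (ω i)))
          - ((n : ℝ) * ((n : ℝ) - 1))⁻¹ *
              ∑ i₁ : Fin n, ∑ i₂ : Fin n,
                (if i₁ = i₂ then 0 else
                  (Y (ω i₁) - bh (X (ω i₁))) *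
                    (∑ a, ∑ c, z (X (ω i₁)) a * G⁻¹ a c * z (X (ω i₂)) c) *
                    (A (ω i₂) - ph (X (ω i₂)))))
        ∂(Measure.pi fun _ : Fin n => P))
      = (∫ ω, (Y ω - b (X ω)) * (A ω - p (X ω)) ∂P)
        + ⟪MemLp.toLp _ hfb - (K.orthogonalProjectionOnto (MemLp.toLp _ hfb) : Lp ℝ 2 (P.map X)),
            MemLp.toLp _ hfp - (K.orthogonalProjectionOnto (MemLp.toLp _ hfp) : Lp ℝ 2 (P.map X))⟫ :=
  stmt5_general P X hX Y A hY hA C hYb hAb b p bh ph hbX hpX z G hG hGinv hfb hfp hzL K hK n hn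
end

section
/- Let X₁, X₂ be i.i.d. random elements of a measurable space S with law μ, and let z̄ : S → ℝᵏ be bounded measurable with Ω := ∫ z̄ z̄ᵀ dμ invertible. Then E[(z̄(X₁)ᵀ Ω⁻¹ z̄(X₂))²] = k. -/
open MeasureTheory

/-- Trace identity behind the variance order of `ÎF₂₂` (Theorem `thm:soif`(i)): for i.i.d.
`X₁, X₂` with law `μ` and Gram matrix `Ω = ∫ z̄ z̄ᵀ dμ` invertible,
`E[(z̄(X₁)ᵀ Ω⁻¹ z̄(X₂))²] = tr(I_k) = k`. -/
theorem stmt6 {S : Type*} [MeasurableSpace S] (μ : Measure S) [IsProbabilityMeasure μ]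
    {k : ℕ} (z : S → Fin k → ℝ) (hz : ∀ j, Measurable fun s => z s j)
    (C : ℝ) (hzB : ∀ s j, |z s j| ≤ C)
    (G : Matrix (Fin k) (Fin k) ℝ)
    (hG : ∀ i j, G i j = ∫ s, z s i * z s j ∂μ)
    (hGinv : IsUnit G) :
    ∫ q : S × S, (∑ a, ∑ c, z q.1 a * G⁻¹ a c * z q.2 c) ^ 2 ∂(μ.prod μ) = (k : ℝ) := by
  -- integrability of pairwise products
  have hint : ∀ i j : Fin k, Integrable (fun s => z s i * z s j) μ := by
    intro i j
    refine Integrable.mono' (integrable_const (C * C)) (((hz i).mul (hz j)).aestronglyMeasurable) ?_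
    filter_upwards with s
    rw [Real.norm_eq_abs, abs_mul]
    exact mul_le_mul (hzB s i) (hzB s j) (abs_nonneg _) ((abs_nonneg _).trans (hzB s i))
  have hGsymm : ∀ i j, G i j = G j i := by
    intro i j; rw [hG, hG]; simp_rw [mul_comm]
  -- rewrite integrand as quadruple sum
  have h1 : ∀ q : S × S, (∑ a, ∑ c, z q.1 a * G⁻¹ a c * z q.2 c) ^ 2
      = ∑ a, ∑ b, ∑ c, ∑ d, (z q.1 a * G⁻¹ a c * z q.2 c) * (z q.1 b * G⁻¹ b d * z q.2 d) := by
    intro q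
    rw [sq, Finset.sum_mul_sum]
    congr 1; ext a; congr 1; ext b
    rw [Finset.sum_mul_sum]
  have hterm : ∀ a b c d : Fin k,
      Integrable (fun q : S × S => (z q.1 a * G⁻¹ a c * z q.2 c) * (z q.1 b * G⁻¹ b d * z q.2 d))
        (μ.prod μ) := by
    intro a b c d
    have : (fun q : S × S => (z q.1 a * G⁻¹ a c * z q.2 c) * (z q.1 b * G⁻¹ b d * z q.2 d))
        = fun q : S × S => ((fun x => G⁻¹ a c * G⁻¹ b d * (z x a * z x b)) q.1)
            * ((fun y => z y c * z y d) q.2) := by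
      ext q; ring
    rw [this]
    exact ((hint a b).const_mul _).mul_prod (hint c d)
  simp_rw [h1]
  rw [integral_finset_sum _ (fun a _ => integrable_finset_sum _ (fun b _ =>
    integrable_finset_sum _ (fun c _ => integrable_finset_sum _ (fun d _ => hterm a b c d))))]
  simp_rw [integral_finset_sum _ (fun _ _ => integrable_finset_sum _ (fun c _ =>
      integrable_finset_sum _ (fun d _ => hterm _ _ c d))),
    integral_finset_sum _ (fun _ _ => integrable_finset_sum _ (fun d _ => hterm _ _ _ d)),
    integral_finset_sum _ (fun _ _ => hterm _ _ _ _)]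
  -- compute each basic integral
  have h2 : ∀ a b c d : Fin k,
      ∫ q : S × S, (z q.1 a * G⁻¹ a c * z q.2 c) * (z q.1 b * G⁻¹ b d * z q.2 d) ∂(μ.prod μ)
        = G⁻¹ a c * G⁻¹ b d * (G a b * G c d) := by
    intro a b c d
    have : (fun q : S × S => (z q.1 a * G⁻¹ a c * z q.2 c) * (z q.1 b * G⁻¹ b d * z q.2 d))
        = fun q : S × S => ((fun x => G⁻¹ a c * G⁻¹ b d * (z x a * z x b)) q.1)
            * ((fun y => z y c * z y d) q.2) := by
      ext q; ring
    rw [this, integral_prod_mul (f := fun x => G⁻¹ a c * G⁻¹ b d * (z x a * z x b))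
      (g := fun y => z y c * z y d), integral_const_mul, hG a b, hG c d]
    ring
  simp_rw [h2]
  -- pure algebra
  have hdet : IsUnit G.det := (Matrix.isUnit_iff_isUnit_det G).mp hGinv
  have hGG : G⁻¹ * G = 1 := Matrix.nonsing_inv_mul G hdet
  have step1 : ∀ b c : Fin k, ∑ d, G⁻¹ b d * G c d = (1 : Matrix (Fin k) (Fin k) ℝ) b c := by
    intro b c
    rw [← hGG, Matrix.mul_apply]
    exact Finset.sum_congr rfl fun d _ => by rw [hGsymm c d]
  calc ∑ a, ∑ b, ∑ c, ∑ d, G⁻¹ a c * G⁻¹ b d * (G a b * G c d)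
      = ∑ a, ∑ c, ∑ b, ∑ d, G⁻¹ a c * G⁻¹ b d * (G a b * G c d) :=
        Finset.sum_congr rfl fun a _ => Finset.sum_comm
    _ = ∑ a, ∑ c, G⁻¹ a c * ∑ b, G a b * ∑ d, G⁻¹ b d * G c d := by
        refine Finset.sum_congr rfl fun a _ => Finset.sum_congr rfl fun c _ => ?_
        rw [Finset.mul_sum]
        refine Finset.sum_congr rfl fun b _ => ?_
        rw [Finset.mul_sum, Finset.mul_sum]
        exact Finset.sum_congr rfl fun d _ => by ring
    _ = ∑ a, ∑ c, G⁻¹ a c * G a c := by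
        refine Finset.sum_congr rfl fun a _ => Finset.sum_congr rfl fun c _ => ?_
        simp_rw [step1]
        rw [← Matrix.mul_apply, Matrix.mul_one]
    _ = ∑ a, (G⁻¹ * G) a a := by
        refine Finset.sum_congr rfl fun a _ => ?_
        rw [Matrix.mul_apply]
        exact Finset.sum_congr rfl fun c _ => by rw [hGsymm a c]
    _ = (k : ℝ) := by rw [hGG]; simp [Matrix.one_apply]
end

section
/- Let O₁ = (Y₁, A₁, X₁), …, Oₙ = (Yₙ, Aₙ, Xₙ) (n ≥ 2) be i.i.d. copies of (Y, A, X), where X takes values in a measurable space S, and let b̂, p̂ : S → ℝ and z̄ : S → ℝᵏ be bounded measurable with Ω := E[z̄(X) z̄(X)ᵀ] invertible. Assume E[Y − b̂(X) | σ(X)] = 0 and E[A − p̂(X) | σ(X)] = 0 almost surely, and |Y − b̂(X)| ≤ C, |A − p̂(X)| ≤ C almost surely for a constant C. Then the statistic ÎF₂₂ := (1/(n(n−1))) Σ_{i₁ ≠ i₂} (Y_{i₁} − b̂(X_{i₁})) z̄(X_{i₁})ᵀ Ω⁻¹ z̄(X_{i₂}) (A_{i₂} − p̂(X_{i₂}))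 has mean zero and variance at most 2C⁴ k / (n(n−1)). -/
/-!
Write `ε = Y - b̂(X)`, `δ = A - p̂(X)` and `κ(x, y) = z̄(X x)ᵀ Ω⁻¹ z̄(X y)`, so that `ÎF₂₂` is the
U-statistic of the kernel `h(x, y) = ε(x) κ(x, y) δ(y)`. Since `κ(·, y)` and `κ(x, ·)` are
functions of `X`, the conditions `E[ε | X] = E[δ | X] = 0` make `h` degenerate: it integrates to
zero in each variable separately. For a degenerate kernel, `E[h(O_i, O_j) h(O_k, O_l)]` vanishes
unless `{i, j} = {k, l}`, because an index occurring only once can be integrated out first.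
Hence `E[ÎF₂₂²] = (E[h(O₁, O₂)²] + E[h(O₁, O₂) h(O₂, O₁)]) / (n(n-1)) ≤ 2 E[h²] / (n(n-1))`.
Finally `E[h²] ≤ C⁴ E[κ²]` and `E[κ²] = tr(Ω⁻¹ Ω Ω⁻¹ Ω) = k`.
-/

open MeasureTheory ProbabilityTheory Finset Function
open scoped Matrix

theorem MeasureTheory.MeasurePreserving.integral_comp_of_aestronglyMeasurable
    {α β E : Type*} [MeasurableSpace α] [MeasurableSpace β] [NormedAddCommGroup E]
    [NormedSpace ℝ E] {μ : Measure α} {ν : Measure β} {φ : α → β} (hφ : MeasurePreserving φ μ ν)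
    {f : β → E} (hf : AEStronglyMeasurable f ν) :
    ∫ x, f (φ x) ∂μ = ∫ y, f y ∂ν := by
  rw [← integral_map hφ.aemeasurable (hφ.map_eq ▸ hf), hφ.map_eq]

section PiMeasure

variable {α ι : Type*} [MeasurableSpace α] [Fintype ι] (P : Measure α) [IsProbabilityMeasure P]

theorem measurePreserving_eval_pair {i j : ι} (hij : i ≠ j) :
    MeasurePreserving (fun ω : ι → α => (ω i, ω j)) (Measure.pi fun _ => P) (P.prod P) := by
  have hind := (iIndepFun_pi (μ := fun _ : ι => P) (X := fun _ x => x)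
    fun _ => aemeasurable_id).indepFun hij
  refine ⟨by fun_prop, ?_⟩
  rw [hind.map_prod_eq_prod_map_map (measurable_pi_apply i).aemeasurable
    (measurable_pi_apply j).aemeasurable]
  exact congr_arg₂ _ (measurePreserving_eval (fun _ : ι => P) i).map_eq
    (measurePreserving_eval (fun _ : ι => P) j).map_eq

theorem measurePreserving_update [DecidableEq ι] (i : ι) :
    MeasurePreserving (fun p : α × (ι → α) => update p.2 i p.1)
      (P.prod (Measure.pi fun _ => P)) (Measure.pi fun _ => P) := by
  refine ⟨by fun_prop, (Measure.pi_eq fun s hs => ?_).symm⟩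
  have hpre : (fun p : α × (ι → α) => update p.2 i p.1) ⁻¹' Set.univ.pi s
      = s i ×ˢ Set.univ.pi (update s i Set.univ) := by
    ext ⟨x, ω⟩
    simp only [Set.mem_preimage, Set.mem_pi, Set.mem_univ, true_implies, Set.mem_prod]
    rw [forall_update_iff ω (fun j y => y ∈ s j), forall_update_iff s (fun j t => ω j ∈ t)]
    simp
  rw [Measure.map_apply (by fun_prop) (MeasurableSet.univ_pi hs), hpre, Measure.prod_prod,
    Measure.pi_pi, ← mul_prod_erase univ _ (mem_univ i), update_self, measure_univ, one_mul,
    ← mul_prod_erase univ (fun j => P (s j)) (mem_univ i)]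
  congr 1
  exact prod_congr rfl fun j hj => by rw [update_of_ne (ne_of_mem_erase hj)]

theorem integral_pi_eq_integral_integral_update [DecidableEq ι] {E : Type*}
    [NormedAddCommGroup E] [NormedSpace ℝ E] (i : ι) {f : (ι → α) → E}
    (hf : Integrable f (Measure.pi fun _ => P)) :
    ∫ ω, f ω ∂(Measure.pi fun _ => P) =
      ∫ ω, ∫ x, f (update ω i x) ∂P ∂(Measure.pi fun _ => P) := by
  have hΦ := measurePreserving_update P i
  rw [← hΦ.integral_comp_of_aestronglyMeasurable hf.aestronglyMeasurable, integral_prod_symm]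
  exact hΦ.integrable_comp_of_integrable hf

end PiMeasure

theorem integral_mul_swap_le_integral_sq {α : Type*} [MeasurableSpace α] {P : Measure α}
    [SFinite P] {h : α → α → ℝ} (hh : MemLp (uncurry h) 2 (P.prod P)) :
    ∫ x, h x.1 x.2 * h x.2 x.1 ∂(P.prod P) ≤ ∫ x, h x.1 x.2 ^ 2 ∂(P.prod P) := by
  have hswap : MemLp (fun x : α × α => h x.2 x.1) 2 (P.prod P) :=
    hh.comp_measurePreserving Measure.measurePreserving_swap
  calc ∫ x, h x.1 x.2 * h x.2 x.1 ∂(P.prod P)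
      ≤ ∫ x, (h x.1 x.2 ^ 2 + h x.2 x.1 ^ 2) / 2 ∂(P.prod P) :=
        integral_mono (hh.integrable_mul hswap)
          ((hh.integrable_sq.add hswap.integrable_sq).div_const 2)
          fun x => by linarith [two_mul_le_add_sq (h x.1 x.2) (h x.2 x.1)]
    _ = ∫ x, h x.1 x.2 ^ 2 ∂(P.prod P) := by
        have hsq := integral_prod_swap (μ := P) (ν := P) fun x => h x.1 x.2 ^ 2
        simp only [Prod.fst_swap, Prod.snd_swap] at hsq
        rw [integral_div, integral_add (f := fun x : α × α => h x.1 x.2 ^ 2) hh.integrable_sq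
          hswap.integrable_sq, hsq]
        ring

section UStatistic

variable {α ι : Type*} [MeasurableSpace α] [Fintype ι]
  (P : Measure α) [IsProbabilityMeasure P] {h : α → α → ℝ}

noncomputable def uStat (h : α → α → ℝ) (ω : ι → α) : ℝ :=
  (#(univ : Finset ι).offDiag : ℝ)⁻¹ * ∑ p ∈ (univ : Finset ι).offDiag, h (ω p.1) (ω p.2)

theorem cast_card_offDiag_univ :
    (#(univ : Finset ι).offDiag : ℝ) = Fintype.card ι * (Fintype.card ι - 1) := by
  rw [offDiag_card, card_univ, Nat.cast_sub (Nat.le_mul_self _)]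
  push_cast
  ring

omit [MeasurableSpace α] in
theorem uStat_apply [DecidableEq ι] (h : α → α → ℝ) (ω : ι → α) :
    uStat h ω = ((Fintype.card ι : ℝ) * (Fintype.card ι - 1))⁻¹ *
      ∑ i, ∑ j, if i = j then 0 else h (ω i) (ω j) := by
  have hsum : (univ : Finset ι).offDiag = (univ ×ˢ univ).filter fun p => p.1 ≠ p.2 := by
    ext p
    simp
  rw [uStat, cast_card_offDiag_univ, hsum, sum_filter, sum_product]
  simp only [ne_eq, ite_not]

theorem memLp_comp_eval_pair (hh : MemLp (uncurry h) 2 (P.prod P)) {i j : ι} (hij : i ≠ j) :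
    MemLp (fun ω : ι → α => h (ω i) (ω j)) 2 (Measure.pi fun _ => P) :=
  hh.comp_measurePreserving (measurePreserving_eval_pair P hij)

theorem integral_comp_eval_pair {F : α × α → ℝ} (hF : AEStronglyMeasurable F (P.prod P))
    {i j : ι} (hij : i ≠ j) :
    ∫ ω, F (ω i, ω j) ∂(Measure.pi fun _ => P) = ∫ x, F x ∂(P.prod P) :=
  (measurePreserving_eval_pair P hij).integral_comp_of_aestronglyMeasurable hF

theorem integral_comp_eval_mul_eq_zero [DecidableEq ι] (hdeg : ∀ y, ∫ x, h x y ∂P = 0)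
    {i j : ι} (hij : i ≠ j) {g : (ι → α) → ℝ} (hg : ∀ ω x, g (update ω i x) = g ω)
    (hint : Integrable (fun ω => h (ω i) (ω j) * g ω) (Measure.pi fun _ => P)) :
    ∫ ω, h (ω i) (ω j) * g ω ∂(Measure.pi fun _ => P) = 0 := by
  rw [integral_pi_eq_integral_integral_update P i hint]
  simp [update_of_ne hij.symm, hg, integral_mul_const, hdeg]

theorem integral_comp_eval_pair_mul_eq_zero (hh : MemLp (uncurry h) 2 (P.prod P))
    (hdeg₁ : ∀ y, ∫ x, h x y ∂P = 0) (hdeg₂ : ∀ x, ∫ y, h x y ∂P = 0) {p q : ι × ι}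
    (hp : p.1 ≠ p.2) (hq : q.1 ≠ q.2) (hqp : q ≠ p) (hqp' : q ≠ p.swap) :
    ∫ ω, h (ω p.1) (ω p.2) * h (ω q.1) (ω q.2) ∂(Measure.pi fun _ => P) = 0 := by
  classical
  have hint := (memLp_comp_eval_pair P hh hp).integrable_mul (memLp_comp_eval_pair P hh hq)
  -- As `{p.1, p.2} ≠ {q.1, q.2}`, an index of `p` occurs only once and can be integrated out.
  obtain ⟨hq₁, hq₂⟩ | ⟨hq₁, hq₂⟩ :
      (p.1 ≠ q.1 ∧ p.1 ≠ q.2) ∨ (p.2 ≠ q.1 ∧ p.2 ≠ q.2) := by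
    obtain ⟨p₁, p₂⟩ := p
    obtain ⟨q₁, q₂⟩ := q
    simp only [ne_eq, Prod.mk.injEq, Prod.swap_prod_mk] at *
    grind
  · exact integral_comp_eval_mul_eq_zero P hdeg₁ hp
      (fun ω x => by simp [update_of_ne hq₁.symm, update_of_ne hq₂.symm]) hint
  · exact integral_comp_eval_mul_eq_zero P (h := flip h) hdeg₂ hp.symm
      (fun ω x => by simp [update_of_ne hq₁.symm, update_of_ne hq₂.symm]) hint

theorem sum_integral_comp_eval_pair_mul (hh : MemLp (uncurry h) 2 (P.prod P))
    (hdeg₁ : ∀ y, ∫ x, h x y ∂P = 0) (hdeg₂ : ∀ x, ∫ y, h x y ∂P = 0) {p : ι × ι}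
    (hp : p ∈ (univ : Finset ι).offDiag) :
    ∑ q ∈ (univ : Finset ι).offDiag,
        ∫ ω, h (ω p.1) (ω p.2) * h (ω q.1) (ω q.2) ∂(Measure.pi fun _ => P)
      = ∫ x, h x.1 x.2 ^ 2 ∂(P.prod P) + ∫ x, h x.1 x.2 * h x.2 x.1 ∂(P.prod P) := by
  have hp' : p.1 ≠ p.2 := (mem_offDiag.1 hp).2.2
  rw [sum_eq_add_of_mem p p.swap hp (by simpa using hp'.symm)
    (fun hpp => hp' (congrArg Prod.fst hpp)) fun q hq hqp =>
      integral_comp_eval_pair_mul_eq_zero P hh hdeg₁ hdeg₂ hp' (mem_offDiag.1 hq).2.2 hqp.1 hqp.2]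
  simp only [← sq, Prod.fst_swap, Prod.snd_swap]
  congr 1
  · exact integral_comp_eval_pair P hh.integrable_sq.aestronglyMeasurable hp'
  · exact integral_comp_eval_pair P (hh.integrable_mul
      (hh.comp_measurePreserving Measure.measurePreserving_swap)).aestronglyMeasurable hp'

theorem memLp_uStat (hh : MemLp (uncurry h) 2 (P.prod P)) :
    MemLp (uStat h : (ι → α) → ℝ) 2 (Measure.pi fun _ => P) :=
  (memLp_finsetSum _ fun _ hp => memLp_comp_eval_pair P hh (mem_offDiag.1 hp).2.2).const_mul _

theorem integral_uStat (hh : MemLp (uncurry h) 2 (P.prod P)) (hdeg : ∀ y, ∫ x, h x y ∂P = 0) :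
    ∫ ω, uStat h ω ∂(Measure.pi fun _ : ι => P) = 0 := by
  classical
  have hint : ∀ p ∈ (univ : Finset ι).offDiag,
      Integrable (fun ω : ι → α => h (ω p.1) (ω p.2)) (Measure.pi fun _ => P) :=
    fun p hp => (memLp_comp_eval_pair P hh (mem_offDiag.1 hp).2.2).integrable one_le_two
  simp only [uStat]
  rw [integral_const_mul, integral_finsetSum _ hint,
    sum_eq_zero fun p hp => ?_, mul_zero]
  simpa using integral_comp_eval_mul_eq_zero P hdeg (mem_offDiag.1 hp).2.2 (g := fun _ => 1)
    (fun _ _ => rfl) (by simpa using hint p hp)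

theorem integral_uStat_sq (hh : MemLp (uncurry h) 2 (P.prod P))
    (hdeg₁ : ∀ y, ∫ x, h x y ∂P = 0) (hdeg₂ : ∀ x, ∫ y, h x y ∂P = 0) :
    ∫ ω, uStat h ω ^ 2 ∂(Measure.pi fun _ : ι => P)
      = (∫ x, h x.1 x.2 ^ 2 ∂(P.prod P) + ∫ x, h x.1 x.2 * h x.2 x.1 ∂(P.prod P))
        / #(univ : Finset ι).offDiag := by
  set D := (univ : Finset ι).offDiag
  have hint : ∀ p ∈ D, ∀ q ∈ D, Integrable
      (fun ω : ι → α => h (ω p.1) (ω p.2) * h (ω q.1) (ω q.2)) (Measure.pi fun _ => P) :=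
    fun p hp q hq => (memLp_comp_eval_pair P hh (mem_offDiag.1 hp).2.2).integrable_mul
      (memLp_comp_eval_pair P hh (mem_offDiag.1 hq).2.2)
  have hsq : ∀ ω : ι → α, uStat h ω ^ 2 = (#D : ℝ)⁻¹ ^ 2 *
      ∑ p ∈ D, ∑ q ∈ D, h (ω p.1) (ω p.2) * h (ω q.1) (ω q.2) := fun ω => by
    rw [uStat, mul_pow, sq (∑ p ∈ D, _), sum_mul_sum]
  simp_rw [hsq]
  rw [integral_const_mul, integral_finsetSum _ fun p hp => integrable_finsetSum _ (hint p hp)]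
  rw [sum_congr rfl fun p hp => (integral_finsetSum _ (hint p hp)).trans
    (sum_integral_comp_eval_pair_mul P hh hdeg₁ hdeg₂ hp), sum_const, nsmul_eq_mul]
  rcases eq_or_ne (#D : ℝ) 0 with hD | hD
  · simp [hD]
  · field_simp

theorem variance_uStat_le (hh : MemLp (uncurry h) 2 (P.prod P))
    (hdeg₁ : ∀ y, ∫ x, h x y ∂P = 0) (hdeg₂ : ∀ x, ∫ y, h x y ∂P = 0) :
    variance (uStat h) (Measure.pi fun _ : ι => P)
      ≤ 2 * (∫ x, h x.1 x.2 ^ 2 ∂(P.prod P)) / #(univ : Finset ι).offDiag := by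
  rw [variance_eq_sub (memLp_uStat P hh), integral_uStat P hh hdeg₁]
  simp only [Pi.pow_apply]
  rw [integral_uStat_sq P hh hdeg₁ hdeg₂, sq (0 : ℝ), mul_zero, sub_zero, two_mul]
  exact div_le_div_of_nonneg_right (add_le_add_right (integral_mul_swap_le_integral_sq hh) _)
    (Nat.cast_nonneg _)

end UStatistic

theorem dotProduct_mulVec_eq_sum_sum {n : Type*} [Fintype n] (M : Matrix n n ℝ) (v w : n → ℝ) :
    v ⬝ᵥ (M *ᵥ w) = ∑ a, ∑ c, v a * M a c * w c := by
  simp only [dotProduct, Matrix.mulVec, mul_sum]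
  exact sum_congr rfl fun a _ => sum_congr rfl fun c _ => by ring

section Gram

variable {α β n : Type*} [MeasurableSpace α] [MeasurableSpace β] [Fintype n]
  {P : Measure α} {Q : Measure β}

noncomputable def gram (P : Measure α) (u : α → n → ℝ) : Matrix n n ℝ :=
  Matrix.of fun a b => ∫ x, u x a * u x b ∂P

omit [Fintype n] in
theorem gram_transpose (u : α → n → ℝ) : (gram P u)ᵀ = gram P u :=
  Matrix.ext fun a b => by simp only [gram, Matrix.transpose_apply, Matrix.of_apply, mul_comm]

theorem memLp_mulVec {u : α → n → ℝ} (hu : ∀ a, MemLp (fun x => u x a) 2 P)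
    (M : Matrix n n ℝ) (a : n) : MemLp (fun x => (M *ᵥ u x) a) 2 P :=
  memLp_finsetSum _ fun c _ => (hu c).const_mul (M a c)

theorem gram_mulVec {u : α → n → ℝ} (hu : ∀ a, MemLp (fun x => u x a) 2 P) (M : Matrix n n ℝ) :
    gram P (fun x => M *ᵥ u x) = M * gram P u * Mᵀ := by
  ext a b
  have hpt : ∀ x, (M *ᵥ u x) a * (M *ᵥ u x) b = ∑ c, ∑ d, M a c * M b d * (u x c * u x d) := by
    intro x
    simp only [Matrix.mulVec, dotProduct, sum_mul_sum]
    exact sum_congr rfl fun c _ => sum_congr rfl fun d _ => by ring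
  have hint : ∀ c d, Integrable (fun x => M a c * M b d * (u x c * u x d)) P :=
    fun c d => ((hu c).integrable_mul (hu d)).const_mul _
  simp only [gram, Matrix.of_apply, Matrix.mul_apply, Matrix.transpose_apply, hpt]
  rw [integral_finsetSum _ fun c _ => integrable_finsetSum _ fun d _ => hint c d]
  simp only [sum_mul]
  conv_rhs => rw [sum_comm]
  refine sum_congr rfl fun c _ => ?_
  rw [integral_finsetSum _ fun d _ => hint c d]
  exact sum_congr rfl fun d _ => by rw [integral_const_mul]; ring

theorem sq_dotProduct (x y : n → ℝ) :
    (x ⬝ᵥ y) ^ 2 = ∑ a, ∑ b, (x a * x b) * (y a * y b) := by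
  simp only [sq, dotProduct, sum_mul_sum]
  exact sum_congr rfl fun a _ => sum_congr rfl fun b _ => by ring

theorem integrable_sq_dotProduct_prod {u : α → n → ℝ} {v : β → n → ℝ}
    (hu : ∀ a, MemLp (fun x => u x a) 2 P) (hv : ∀ a, MemLp (fun y => v y a) 2 Q) :
    Integrable (fun p : α × β => (u p.1 ⬝ᵥ v p.2) ^ 2) (P.prod Q) := by
  simp_rw [sq_dotProduct]
  exact integrable_finsetSum _ fun a _ => integrable_finsetSum _ fun b _ =>
    ((hu a).integrable_mul (hu b)).mul_prod ((hv a).integrable_mul (hv b))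

theorem memLp_dotProduct_prod {u : α → n → ℝ} {v : β → n → ℝ}
    (hu : ∀ a, MemLp (fun x => u x a) 2 P) (hv : ∀ a, MemLp (fun y => v y a) 2 Q) :
    MemLp (fun p : α × β => u p.1 ⬝ᵥ v p.2) 2 (P.prod Q) :=
  (memLp_two_iff_integrable_sq (Finset.aestronglyMeasurable_fun_sum _ fun a _ =>
    ((hu a).1.comp_quasiMeasurePreserving Measure.quasiMeasurePreserving_fst).mul
      ((hv a).1.comp_quasiMeasurePreserving Measure.quasiMeasurePreserving_snd))).2
    (integrable_sq_dotProduct_prod hu hv)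

theorem integral_sq_dotProduct_prod [SFinite P] [SFinite Q] {u : α → n → ℝ} {v : β → n → ℝ}
    (hu : ∀ a, MemLp (fun x => u x a) 2 P) (hv : ∀ a, MemLp (fun y => v y a) 2 Q) :
    ∫ p, (u p.1 ⬝ᵥ v p.2) ^ 2 ∂(P.prod Q) = (gram P u * (gram Q v)ᵀ).trace := by
  have hint : ∀ a b, Integrable (fun p : α × β => u p.1 a * u p.1 b * (v p.2 a * v p.2 b))
      (P.prod Q) := fun a b =>
    ((hu a).integrable_mul (hu b)).mul_prod ((hv a).integrable_mul (hv b))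
  simp_rw [sq_dotProduct]
  rw [integral_finsetSum _ fun a _ => integrable_finsetSum _ fun b _ => hint a b]
  simp only [Matrix.trace, Matrix.diag_apply, Matrix.mul_apply, Matrix.transpose_apply, gram,
    Matrix.of_apply]
  refine sum_congr rfl fun a _ => ?_
  rw [integral_finsetSum _ fun b _ => hint a b]
  exact sum_congr rfl fun b _ => integral_prod_mul (fun x => u x a * u x b) fun y => v y a * v y b

theorem integral_sq_dotProduct_inv_gram_mulVec [DecidableEq n] [SFinite P] {u : α → n → ℝ}
    (hu : ∀ a, MemLp (fun x => u x a) 2 P) (hG : IsUnit (gram P u)) :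
    ∫ p, (u p.1 ⬝ᵥ ((gram P u)⁻¹ *ᵥ u p.2)) ^ 2 ∂(P.prod P) = Fintype.card n := by
  have hdet := (Matrix.isUnit_iff_isUnit_det _).1 hG
  rw [integral_sq_dotProduct_prod hu (memLp_mulVec hu _), gram_mulVec hu, Matrix.transpose_mul,
    Matrix.transpose_mul, Matrix.transpose_transpose, Matrix.transpose_nonsing_inv,
    gram_transpose, Matrix.mul_nonsing_inv _ hdet, Matrix.mul_one, Matrix.mul_nonsing_inv _ hdet,
    Matrix.trace_one]

end Gram

theorem integral_mul_eq_zero_of_condExp_eq_zero {Ω : Type*} {m m₀ : MeasurableSpace Ω}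
    {P : Measure Ω} (hm : m ≤ m₀) [SigmaFinite (P.trim hm)] {W g : Ω → ℝ}
    (hg : AEStronglyMeasurable[m] g P) (hWg : Integrable (W * g) P) (hW : Integrable W P)
    (hcond : P[W|m] =ᵐ[P] 0) :
    ∫ ω, W ω * g ω ∂P = 0 :=
  calc ∫ ω, W ω * g ω ∂P = ∫ ω, P[W * g|m] ω ∂P := (integral_condExp hm).symm
    _ = ∫ ω, (P[W|m] * g) ω ∂P :=
        integral_congr_ae (condExp_mul_of_aestronglyMeasurable_right hg hWg hW)
    _ = ∫ ω, ((0 : Ω → ℝ) * g) ω ∂P := integral_congr_ae (hcond.mul (ae_eq_refl g))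
    _ = 0 := by simp

section Residual

variable {Ω S n : Type*} [MeasurableSpace Ω] [MeasurableSpace S] [Fintype n] {P : Measure Ω}
  [IsFiniteMeasure P] {X : Ω → S} {W : Ω → ℝ} {z : S → n → ℝ}

theorem integral_mul_comp_eq_zero_of_condExp_eq_zero (hX : Measurable X) (hW : MemLp W 2 P)
    (hcond : P[W|MeasurableSpace.comap X inferInstance] =ᵐ[P] 0) {f : S → ℝ}
    (hf : Measurable f) (hfX : MemLp (fun ω => f (X ω)) 2 P) :
    ∫ ω, W ω * f (X ω) ∂P = 0 :=
  integral_mul_eq_zero_of_condExp_eq_zero hX.comap_le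
    (hf.comp (comap_measurable X)).aestronglyMeasurable (hW.integrable_mul hfX)
    (hW.integrable one_le_two) hcond

theorem integral_mul_dotProduct_eq_zero (hX : Measurable X) (hW : MemLp W 2 P)
    (hcond : P[W|MeasurableSpace.comap X inferInstance] =ᵐ[P] 0)
    (hz : ∀ a, Measurable fun s => z s a) (hzX : ∀ a, MemLp (fun ω => z (X ω) a) 2 P)
    (w : n → ℝ) :
    ∫ ω, W ω * (z (X ω) ⬝ᵥ w) ∂P = 0 :=
  integral_mul_comp_eq_zero_of_condExp_eq_zero hX hW hcond (f := fun s => z s ⬝ᵥ w)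
    (Finset.measurable_sum _ fun a _ => (hz a).mul_const _)
    (memLp_finsetSum _ fun a _ => (hzX a).mul_const (w a))

theorem integral_mul_dotProduct_mulVec_mul_eq_zero_left (hX : Measurable X) (hW : MemLp W 2 P)
    (hcond : P[W|MeasurableSpace.comap X inferInstance] =ᵐ[P] 0)
    (hz : ∀ a, Measurable fun s => z s a) (hzX : ∀ a, MemLp (fun ω => z (X ω) a) 2 P)
    (M : Matrix n n ℝ) (V : Ω → ℝ) (y : Ω) :
    ∫ x, W x * (z (X x) ⬝ᵥ (M *ᵥ z (X y))) * V y ∂P = 0 := by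
  rw [integral_mul_const, integral_mul_dotProduct_eq_zero hX hW hcond hz hzX, zero_mul]

theorem integral_mul_dotProduct_mulVec_mul_eq_zero_right (hX : Measurable X) (hW : MemLp W 2 P)
    (hcond : P[W|MeasurableSpace.comap X inferInstance] =ᵐ[P] 0)
    (hz : ∀ a, Measurable fun s => z s a) (hzX : ∀ a, MemLp (fun ω => z (X ω) a) 2 P)
    (M : Matrix n n ℝ) (V : Ω → ℝ) (x : Ω) :
    ∫ y, V x * (z (X x) ⬝ᵥ (M *ᵥ z (X y))) * W y ∂P = 0 := by
  have hcomm : ∀ y, V x * (z (X x) ⬝ᵥ (M *ᵥ z (X y))) * W y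
      = V x * (W y * (z (X y) ⬝ᵥ (z (X x) ᵥ* M))) := fun y => by
    rw [Matrix.dotProduct_mulVec, dotProduct_comm (z (X y))]
    ring
  simp only [hcomm, integral_const_mul, integral_mul_dotProduct_eq_zero hX hW hcond hz hzX,
    mul_zero]

end Residual

section WeightedKernel

variable {α β : Type*} [MeasurableSpace α] [MeasurableSpace β] {P : Measure α} {Q : Measure β}
  {ε : α → ℝ} {δ : β → ℝ} {C : ℝ} {κ : α → β → ℝ}

theorem ae_sq_mul_mul_prod_le (hε : ∀ᵐ x ∂P, |ε x| ≤ C) (hδ : ∀ᵐ y ∂Q, |δ y| ≤ C) :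
    ∀ᵐ p ∂(P.prod Q), (ε p.1 * κ p.1 p.2 * δ p.2) ^ 2 ≤ C ^ 4 * κ p.1 p.2 ^ 2 := by
  filter_upwards [Measure.quasiMeasurePreserving_fst.ae hε,
    Measure.quasiMeasurePreserving_snd.ae hδ] with p hε' hδ'
  have hε2 : ε p.1 ^ 2 ≤ C ^ 2 := sq_abs (ε p.1) ▸ pow_le_pow_left₀ (abs_nonneg _) hε' 2
  have hδ2 : δ p.2 ^ 2 ≤ C ^ 2 := sq_abs (δ p.2) ▸ pow_le_pow_left₀ (abs_nonneg _) hδ' 2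
  calc (ε p.1 * κ p.1 p.2 * δ p.2) ^ 2 = ε p.1 ^ 2 * δ p.2 ^ 2 * κ p.1 p.2 ^ 2 := by ring
    _ ≤ C ^ 2 * C ^ 2 * κ p.1 p.2 ^ 2 := by gcongr
    _ = C ^ 4 * κ p.1 p.2 ^ 2 := by ring

theorem memLp_mul_mul_prod (hεm : AEStronglyMeasurable ε P) (hδm : AEStronglyMeasurable δ Q)
    (hε : ∀ᵐ x ∂P, |ε x| ≤ C) (hδ : ∀ᵐ y ∂Q, |δ y| ≤ C) (hκ : MemLp (uncurry κ) 2 (P.prod Q)) :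
    MemLp (fun p => ε p.1 * κ p.1 p.2 * δ p.2) 2 (P.prod Q) := by
  have hm : AEStronglyMeasurable (fun p : α × β => ε p.1 * κ p.1 p.2 * δ p.2) (P.prod Q) :=
    (hεm.comp_quasiMeasurePreserving Measure.quasiMeasurePreserving_fst).mul hκ.1 |>.mul
      (hδm.comp_quasiMeasurePreserving Measure.quasiMeasurePreserving_snd)
  refine (memLp_two_iff_integrable_sq hm).2 <|
    (hκ.integrable_sq.const_mul (C ^ 4)).mono' (hm.pow 2) ?_
  filter_upwards [ae_sq_mul_mul_prod_le hε hδ] with p hp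
  rwa [Real.norm_eq_abs, abs_of_nonneg (sq_nonneg _)]

theorem integral_sq_mul_mul_prod_le (hεm : AEStronglyMeasurable ε P)
    (hδm : AEStronglyMeasurable δ Q) (hε : ∀ᵐ x ∂P, |ε x| ≤ C) (hδ : ∀ᵐ y ∂Q, |δ y| ≤ C) (hκ : MemLp (uncurry κ) 2 (P.prod Q)) :
    ∫ p, (ε p.1 * κ p.1 p.2 * δ p.2) ^ 2 ∂(P.prod Q) ≤ C ^ 4 * ∫ p, κ p.1 p.2 ^ 2 ∂(P.prod Q) := by
  rw [← integral_const_mul]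
  exact integral_mono_ae (memLp_mul_mul_prod hεm hδm hε hδ hκ).integrable_sq
    (hκ.integrable_sq.const_mul _) (ae_sq_mul_mul_prod_le hε hδ)

end WeightedKernel

theorem stmt7_general {Ω S : Type*} [MeasurableSpace Ω] [MeasurableSpace S]
    (P : Measure Ω) [IsProbabilityMeasure P]
    (X : Ω → S) (hX : Measurable X)
    (Y A : Ω → ℝ) (hY : Measurable Y) (hA : Measurable A)
    (bh ph : S → ℝ) (hbh : Measurable bh) (hph : Measurable ph)
    {k : ℕ} (z : S → Fin k → ℝ) (hz : ∀ j, Measurable fun s => z s j)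
    (Cz : ℝ) (hzB : ∀ s j, |z s j| ≤ Cz)
    (G : Matrix (Fin k) (Fin k) ℝ)
    (hG : ∀ i j, G i j = ∫ ω, z (X ω) i * z (X ω) j ∂P)
    (hGinv : IsUnit G)
    (hYc : P[(fun ω => Y ω - bh (X ω)) | MeasurableSpace.comap X inferInstance] =ᵐ[P] 0)
    (hAc : P[(fun ω => A ω - ph (X ω)) | MeasurableSpace.comap X inferInstance] =ᵐ[P] 0)
    (C : ℝ)
    (hYb : ∀ᵐ ω ∂P, |Y ω - bh (X ω)| ≤ C)
    (hAb : ∀ᵐ ω ∂P, |A ω - ph (X ω)| ≤ C)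
    (n : ℕ)
    (U : (Fin n → Ω) → ℝ)
    (hU : U = fun ω =>
      ((n : ℝ) * ((n : ℝ) - 1))⁻¹ *
        ∑ i₁ : Fin n, ∑ i₂ : Fin n,
          (if i₁ = i₂ then 0 else
            (Y (ω i₁) - bh (X (ω i₁))) *
              (∑ a, ∑ c, z (X (ω i₁)) a * G⁻¹ a c * z (X (ω i₂)) c) *
              (A (ω i₂) - ph (X (ω i₂))))) :
    (∫ ω, U ω ∂(Measure.pi fun _ : Fin n => P)) = 0
    ∧ variance U (Measure.pi fun _ : Fin n => P)
        ≤ 2 * C ^ 4 * (k : ℝ) / ((n : ℝ) * ((n : ℝ) - 1)) := by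
  set ε : Ω → ℝ := fun ω => Y ω - bh (X ω)
  set δ : Ω → ℝ := fun ω => A ω - ph (X ω)
  have hzX : ∀ a, MemLp (fun ω => z (X ω) a) 2 P := fun a =>
    .of_bound ((hz a).comp hX).aestronglyMeasurable Cz (ae_of_all _ fun ω => hzB _ a)
  have hε : MemLp ε 2 P := .of_bound (hY.sub (hbh.comp hX)).aestronglyMeasurable C hYb
  have hδ : MemLp δ 2 P := .of_bound (hA.sub (hph.comp hX)).aestronglyMeasurable C hAb
  have hGram : gram P (fun ω => z (X ω)) = G := Matrix.ext fun a b => (hG a b).symm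
  set h : Ω → Ω → ℝ := fun x y => ε x * (z (X x) ⬝ᵥ (G⁻¹ *ᵥ z (X y))) * δ y
  have hUh : U = uStat h := by
    ext ω
    simp only [hU, uStat_apply, Fintype.card_fin, h, ε, δ, dotProduct_mulVec_eq_sum_sum]
  have hκ : MemLp (uncurry fun x y => z (X x) ⬝ᵥ (G⁻¹ *ᵥ z (X y))) 2 (P.prod P) :=
    memLp_dotProduct_prod hzX (memLp_mulVec hzX G⁻¹)
  have hh : MemLp (uncurry h) 2 (P.prod P) := memLp_mul_mul_prod hε.1 hδ.1 hYb hAb hκ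
  have hdeg₁ : ∀ y, ∫ x, h x y ∂P = 0 :=
    integral_mul_dotProduct_mulVec_mul_eq_zero_left hX hε hYc hz hzX G⁻¹ δ
  have hdeg₂ : ∀ x, ∫ y, h x y ∂P = 0 :=
    integral_mul_dotProduct_mulVec_mul_eq_zero_right hX hδ hAc hz hzX G⁻¹ ε
  have hk := integral_sq_dotProduct_inv_gram_mulVec hzX (hGram ▸ hGinv)
  rw [hGram, Fintype.card_fin] at hk
  have hh2 : ∫ p, h p.1 p.2 ^ 2 ∂(P.prod P) ≤ C ^ 4 * k :=
    hk ▸ integral_sq_mul_mul_prod_le hε.1 hδ.1 hYb hAb hκ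
  refine ⟨hUh ▸ integral_uStat P hh hdeg₁, ?_⟩
  calc variance U (Measure.pi fun _ => P)
      ≤ 2 * (∫ p, h p.1 p.2 ^ 2 ∂(P.prod P)) / #(univ : Finset (Fin n)).offDiag :=
        hUh ▸ variance_uStat_le P hh hdeg₁ hdeg₂
    _ ≤ 2 * (C ^ 4 * k) / #(univ : Finset (Fin n)).offDiag := by gcongr
    _ = 2 * C ^ 4 * (k : ℝ) / ((n : ℝ) * ((n : ℝ) - 1)) := by
        rw [cast_card_offDiag_univ, Fintype.card_fin, mul_assoc]

/-- Quantitative version of Theorem `thm:soif`(i): under the degeneracy conditions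
`E[Y - b̂(X) | σ(X)] = 0` and `E[A - p̂(X) | σ(X)] = 0` a.s. and a.s. bounds `≤ C` on the
residuals, the second-order U-statistic `ÎF₂₂` over `n ≥ 2` i.i.d. copies has mean zero and
variance at most `2 C⁴ k / (n(n-1))`. -/
theorem stmt7 {Ω S : Type*} [MeasurableSpace Ω] [MeasurableSpace S]
    (P : Measure Ω) [IsProbabilityMeasure P]
    (X : Ω → S) (hX : Measurable X)
    (Y A : Ω → ℝ) (hY : Measurable Y) (hA : Measurable A)
    (bh ph : S → ℝ) (hbh : Measurable bh) (hph : Measurable ph)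
    {k : ℕ} (z : S → Fin k → ℝ) (hz : ∀ j, Measurable fun s => z s j)
    (Cz : ℝ) (hzB : ∀ s j, |z s j| ≤ Cz)
    (G : Matrix (Fin k) (Fin k) ℝ)
    (hG : ∀ i j, G i j = ∫ ω, z (X ω) i * z (X ω) j ∂P)
    (hGinv : IsUnit G)
    (hYc : P[(fun ω => Y ω - bh (X ω)) | MeasurableSpace.comap X inferInstance] =ᵐ[P] 0)
    (hAc : P[(fun ω => A ω - ph (X ω)) | MeasurableSpace.comap X inferInstance] =ᵐ[P] 0)
    (C : ℝ)
    (hYb : ∀ᵐ ω ∂P, |Y ω - bh (X ω)| ≤ C)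
    (hAb : ∀ᵐ ω ∂P, |A ω - ph (X ω)| ≤ C)
    (n : ℕ) (hn : 2 ≤ n)
    (U : (Fin n → Ω) → ℝ)
    (hU : U = fun ω =>
      ((n : ℝ) * ((n : ℝ) - 1))⁻¹ *
        ∑ i₁ : Fin n, ∑ i₂ : Fin n,
          (if i₁ = i₂ then 0 else
            (Y (ω i₁) - bh (X (ω i₁))) *
              (∑ a, ∑ c, z (X (ω i₁)) a * G⁻¹ a c * z (X (ω i₂)) c) *
              (A (ω i₂) - ph (X (ω i₂))))) :
    (∫ ω, U ω ∂(Measure.pi fun _ : Fin n => P)) = 0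
    ∧ variance U (Measure.pi fun _ : Fin n => P)
        ≤ 2 * C ^ 4 * (k : ℝ) / ((n : ℝ) * ((n : ℝ) - 1)) :=
  stmt7_general P X hX Y A hY hA bh ph hbh hph z hz Cz hzB G hG hGinv hYc hAc C hYb hAb n U hU
end

section
/- Let O₁, …, Oₙ (n ≥ 4) be i.i.d. random elements of a measurable space T with law ν, and let h : T × T → ℝ be measurable with ∫∫ h(o₁, o₂)² dν(o₁) dν(o₂) < ∞. Define U := (1/(n(n−1))) Σ_{1 ≤ i ≠ j ≤ n} h(Oᵢ, Oⱼ). Then Var[U] = (1/(n(n−1))) E[h(O₁,O₂)² + h(O₁,O₂) h(O₂,O₁)] + ((n−2)/(n(n−1))) E[h(O₁,O₂) h(O₁,O₃) + h(O₁,O₂) h(O₃,O₁) + h(O₁,O₂) h(O₂,O₃) + h(O₁,O₂) h(O₃,O₂)] + ( (n−2)(n−3)/(n(n−1)) − 1 ) (E[h(O₁,O₂)])². -/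
/-!
Write `U = (n(n-1))⁻¹ ∑_{i ≠ j} G_{ij}` with `G_{ij} = h(Oᵢ, Oⱼ)`, so that
`Var U = (n(n-1))⁻² ∑_{(i,j), (k,l)} Cov(G_{ij}, G_{kl})`. The coordinates being independent with
law `ν`, each covariance depends only on how the two index pairs overlap: it vanishes when they are
disjoint (or one of them is diagonal), it is `E[h₁₂²] - (E h₁₂)²` or `E[h₁₂ h₂₁] - (E h₁₂)²` when
`(k,l)` is `(i,j)` or `(j,i)`, and it is one of `E[h₁₂h₁₃]`, `E[h₁₂h₃₁]`, `E[h₁₂h₂₃]`, `E[h₁₂h₃₂]`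
minus `(E h₁₂)²` when exactly one index is shared. Each of the `n(n-1)` off-diagonal pairs meets
one equal pair, one reversed pair and `n - 2` pairs of each single-overlap kind.
-/

open MeasureTheory ProbabilityTheory

section MeasurePreserving

variable {α β Ω : Type*} [MeasurableSpace α] [MeasurableSpace β] [MeasurableSpace Ω]
  {μ : Measure α} {μ' : Measure β} {P : Measure Ω}

theorem MeasureTheory.MeasurePreserving.integral_comp_of_aestronglyMeasurable_s9 {π : Ω → α}
    (hπ : MeasurePreserving π P μ) {g : α → ℝ} (hg : AEStronglyMeasurable g μ) :
    ∫ ω, g (π ω) ∂P = ∫ a, g a ∂μ := by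
  rw [← hπ.map_eq] at hg ⊢
  exact (integral_map hπ.measurable.aemeasurable hg).symm

theorem MeasureTheory.MemLp.integrable_comp_mul_comp {g : α → ℝ} (hg : MemLp g 2 μ)
    {π₁ π₂ : Ω → α} (h₁ : MeasurePreserving π₁ P μ) (h₂ : MeasurePreserving π₂ P μ) :
    Integrable (fun ω => g (π₁ ω) * g (π₂ ω)) P :=
  (hg.comp_measurePreserving h₁).integrable_mul (hg.comp_measurePreserving h₂)

theorem ProbabilityTheory.IndepFun.measurePreserving_prodMk [IsFiniteMeasure P] {X : Ω → α}
    {Y : Ω → β} (hXY : IndepFun X Y P) (hX : MeasurePreserving X P μ)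
    (hY : MeasurePreserving Y P μ') :
    MeasurePreserving (fun ω => (X ω, Y ω)) P (μ.prod μ') := by
  refine ⟨hX.measurable.prodMk hY.measurable, ?_⟩
  rw [(indepFun_iff_map_prod_eq_prod_map_map hX.measurable.aemeasurable
    hY.measurable.aemeasurable).1 hXY, hX.map_eq, hY.map_eq]

end MeasurePreserving

namespace UStatistic

section Counting

variable {ι : Type*} [DecidableEq ι]

def overlapCov (a b c₁ c₂ c₃ c₄ : ℝ) (p q : ι × ι) : ℝ :=
  if p.1 = p.2 ∨ q.1 = q.2 then 0
  else if p = q then a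
  else if p = q.swap then b
  else if p.1 = q.1 then c₁
  else if p.1 = q.2 then c₂
  else if p.2 = q.1 then c₃
  else if p.2 = q.2 then c₄
  else 0

-- In Kronecker deltas the classification is a polynomial, whose sums over `ι` evaluate termwise.
lemma overlapCov_eq_indicator (a b c₁ c₂ c₃ c₄ : ℝ) (i j k l : ι) :
    overlapCov a b c₁ c₂ c₃ c₄ (i, j) (k, l) =
      (1 - if i = j then 1 else 0) * ((1 - if k = l then 1 else 0) *
        ((if i = k then c₁ else 0) + (if i = l then c₂ else 0) + (if j = k then c₃ else 0)
          + (if j = l then c₄ else 0)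
          + (if i = k then if j = l then a - c₁ - c₄ else 0 else 0)
          + (if i = l then if j = k then b - c₂ - c₃ else 0 else 0))) := by
  unfold overlapCov
  by_cases hij : i = j <;> by_cases hkl : k = l <;> by_cases hik : i = k <;>
    by_cases hil : i = l <;> by_cases hjk : j = k <;> by_cases hjl : j = l <;> simp_all

theorem sum_overlapCov [Fintype ι] (a b c₁ c₂ c₃ c₄ : ℝ) :
    ∑ p : ι × ι, ∑ q : ι × ι, overlapCov a b c₁ c₂ c₃ c₄ p q =
      Fintype.card ι * (Fintype.card ι - 1) *
        (a + b + (Fintype.card ι - 2) * (c₁ + c₂ + c₃ + c₄)) := by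
  simp only [Fintype.sum_prod_type, overlapCov_eq_indicator, mul_add, sub_mul, one_mul, ite_mul,
    mul_ite, zero_mul, mul_zero, Finset.sum_add_distrib, Finset.sum_sub_distrib,
    Finset.sum_ite_eq, Finset.sum_ite_eq', Finset.mem_univ, if_true, Finset.sum_const,
    Finset.card_univ, nsmul_eq_mul, Finset.sum_ite_irrel]
  ring

end Counting

section Coordinates

variable {T : Type*} [MeasurableSpace T] (ν : Measure T) [IsProbabilityMeasure ν]
  {ι : Type*} [Fintype ι]

theorem iIndepFun_pi_eval : iIndepFun (fun i (x : ι → T) => x i) (Measure.pi fun _ => ν) :=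
  iIndepFun_pi (X := fun _ => id) fun _ => aemeasurable_id

theorem measurePreserving_eval_pair {i j : ι} (hij : i ≠ j) :
    MeasurePreserving (fun x : ι → T => (x i, x j)) (Measure.pi fun _ => ν) (ν.prod ν) :=
  ((iIndepFun_pi_eval ν).indepFun hij).measurePreserving_prodMk
    (measurePreserving_eval _ i) (measurePreserving_eval _ j)

theorem measurePreserving_eval_triple {i j k : ι} (hij : i ≠ j) (hik : i ≠ k) (hjk : j ≠ k) :
    MeasurePreserving (fun x : ι → T => (x i, x j, x k)) (Measure.pi fun _ => ν)
      (ν.prod (ν.prod ν)) :=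
  ((iIndepFun_pi_eval ν).indepFun_prodMk measurable_pi_apply j k i hij.symm hik.symm).symm
    |>.measurePreserving_prodMk (measurePreserving_eval _ i) (measurePreserving_eval_pair ν hjk)

theorem integral_eval_pair {i j : ι} (hij : i ≠ j) {g : T × T → ℝ}
    (hg : AEStronglyMeasurable g (ν.prod ν)) :
    ∫ x, g (x i, x j) ∂(Measure.pi fun _ => ν) = ∫ r, g r ∂(ν.prod ν) :=
  (measurePreserving_eval_pair ν hij).integral_comp_of_aestronglyMeasurable_s9 hg

theorem integral_eval_triple {i j k : ι} (hij : i ≠ j) (hik : i ≠ k) (hjk : j ≠ k)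
    {g : T × T × T → ℝ} (hg : AEStronglyMeasurable g (ν.prod (ν.prod ν))) :
    ∫ x, g (x i, x j, x k) ∂(Measure.pi fun _ => ν) = ∫ r, g r ∂(ν.prod (ν.prod ν)) :=
  (measurePreserving_eval_triple ν hij hik hjk).integral_comp_of_aestronglyMeasurable_s9 hg

end Coordinates

section Terms

variable {T ι : Type*} [DecidableEq ι] (h : T → T → ℝ)

def offDiagTerm (p : ι × ι) (x : ι → T) : ℝ := if p.1 = p.2 then 0 else h (x p.1) (x p.2)

lemma offDiagTerm_of_ne {i j : ι} (hij : i ≠ j) :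
    offDiagTerm h (i, j) = fun x => h (x i) (x j) := by
  ext x; simp [offDiagTerm, hij]

lemma offDiagTerm_self (i : ι) : offDiagTerm h (i, i) = fun (_ : ι → T) => (0 : ℝ) := by
  ext x; simp [offDiagTerm]

variable [MeasurableSpace T] (ν : Measure T) [IsProbabilityMeasure ν] [Fintype ι] {h}

lemma memLp_offDiagTerm (hL2 : MemLp (fun q : T × T => h q.1 q.2) 2 (ν.prod ν)) (p : ι × ι) :
    MemLp (offDiagTerm h p) 2 (Measure.pi fun _ => ν) := by
  obtain ⟨i, j⟩ := p
  by_cases hij : i = j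
  · subst hij; rw [offDiagTerm_self]; exact memLp_const 0
  · rw [offDiagTerm_of_ne h hij]
    exact hL2.comp_measurePreserving (measurePreserving_eval_pair ν hij)

theorem covariance_offDiagTerm_of_disjoint (hmeas : Measurable (Function.uncurry h))
    (hL2 : MemLp (fun q : T × T => h q.1 q.2) 2 (ν.prod ν)) {i j k l : ι} (hij : i ≠ j)
    (hkl : k ≠ l) (hik : i ≠ k) (hil : i ≠ l) (hjk : j ≠ k) (hjl : j ≠ l) :
    cov[offDiagTerm h (i, j), offDiagTerm h (k, l); Measure.pi fun _ => ν] = 0 := by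
  rw [offDiagTerm_of_ne h hij, offDiagTerm_of_ne h hkl]
  exact ((iIndepFun_pi_eval ν).indepFun_prodMk_prodMk measurable_pi_apply
      i j k l hik hil hjk hjl).comp hmeas hmeas |>.covariance_eq_zero
    (hL2.comp_measurePreserving (measurePreserving_eval_pair ν hij))
    (hL2.comp_measurePreserving (measurePreserving_eval_pair ν hkl))

theorem covariance_offDiagTerm (hmeas : Measurable (Function.uncurry h))
    (hL2 : MemLp (fun q : T × T => h q.1 q.2) 2 (ν.prod ν)) (p q : ι × ι) :
    cov[offDiagTerm h p, offDiagTerm h q; Measure.pi fun _ => ν] =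
      overlapCov
        ((∫ r, h r.1 r.2 * h r.1 r.2 ∂(ν.prod ν)) - (∫ r, h r.1 r.2 ∂(ν.prod ν)) ^ 2)
        ((∫ r, h r.1 r.2 * h r.2 r.1 ∂(ν.prod ν)) - (∫ r, h r.1 r.2 ∂(ν.prod ν)) ^ 2)
        ((∫ r, h r.1 r.2.1 * h r.1 r.2.2 ∂(ν.prod (ν.prod ν))) - (∫ r, h r.1 r.2 ∂(ν.prod ν)) ^ 2)
        ((∫ r, h r.1 r.2.1 * h r.2.2 r.1 ∂(ν.prod (ν.prod ν))) - (∫ r, h r.1 r.2 ∂(ν.prod ν)) ^ 2)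
        ((∫ r, h r.1 r.2.1 * h r.2.1 r.2.2 ∂(ν.prod (ν.prod ν))) - (∫ r, h r.1 r.2 ∂(ν.prod ν)) ^ 2)
        ((∫ r, h r.1 r.2.1 * h r.2.2 r.2.1 ∂(ν.prod (ν.prod ν))) - (∫ r, h r.1 r.2 ∂(ν.prod ν)) ^ 2)
        p q := by
  obtain ⟨i, j⟩ := p
  obtain ⟨k, l⟩ := q
  by_cases hij : i = j
  · subst hij; simp [offDiagTerm_self, overlapCov, covariance_const_left]
  by_cases hkl : k = l
  · subst hkl; simp [offDiagTerm_self, overlapCov, covariance_const_right]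
  by_cases hdisj : i ≠ k ∧ i ≠ l ∧ j ≠ k ∧ j ≠ l
  · obtain ⟨hik, hil, hjk, hjl⟩ := hdisj
    rw [covariance_offDiagTerm_of_disjoint ν hmeas hL2 hij hkl hik hil hjk hjl]
    simp [overlapCov, hij, hkl, hik, hil, hjk, hjl]
  have hmean {a b : ι} (hab : a ≠ b) :
      ∫ x, h (x a) (x b) ∂(Measure.pi fun _ => ν) = ∫ r, h r.1 r.2 ∂(ν.prod ν) :=
    integral_eval_pair ν hab (g := fun r => h r.1 r.2) (by fun_prop)
  rw [covariance_eq_sub (memLp_offDiagTerm ν hL2 _) (memLp_offDiagTerm ν hL2 _),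
    offDiagTerm_of_ne h hij, offDiagTerm_of_ne h hkl, hmean hij, hmean hkl, ← sq]
  simp only [Pi.mul_apply, overlapCov, hij, hkl, or_self, if_false, Prod.mk.injEq,
    Prod.swap_prod_mk]
  obtain rfl | hik := eq_or_ne i k
  · obtain rfl | hjl := eq_or_ne j l
    · simp only [and_self, if_true]
      exact congrArg (· - _) <|
        integral_eval_pair ν hij (g := fun r => h r.1 r.2 * h r.1 r.2) (by fun_prop)
    · simp only [hjl, hkl, and_false, false_and, if_false]
      exact congrArg (· - _) <| integral_eval_triple ν hij hkl hjl
        (g := fun r => h r.1 r.2.1 * h r.1 r.2.2) (by fun_prop)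
  obtain rfl | hil := eq_or_ne i l
  · obtain rfl | hjk := eq_or_ne j k
    · simp only [hik, and_self, false_and, if_true, if_false]
      exact congrArg (· - _) <|
        integral_eval_pair ν hij (g := fun r => h r.1 r.2 * h r.2 r.1) (by fun_prop)
    · simp only [hik, hjk, false_and, and_false, if_true, if_false]
      exact congrArg (· - _) <| integral_eval_triple ν hij hik hjk
        (g := fun r => h r.1 r.2.1 * h r.2.2 r.1) (by fun_prop)
  obtain rfl | hjk := eq_or_ne j k
  · simp only [hik, hil, false_and, if_true, if_false]
    exact congrArg (· - _) <| integral_eval_triple ν hij hil hkl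
      (g := fun r => h r.1 r.2.1 * h r.2.1 r.2.2) (by fun_prop)
  obtain rfl | hjl := eq_or_ne j l
  · simp only [hik, hil, hjk, false_and, and_false, if_true, if_false]
    exact congrArg (· - _) <| integral_eval_triple ν hij hik hjk
      (g := fun r => h r.1 r.2.1 * h r.2.2 r.2.1) (by fun_prop)
  exact absurd ⟨hik, hil, hjk, hjl⟩ hdisj

lemma integral_sq_add_mul_swap (hL2 : MemLp (fun q : T × T => h q.1 q.2) 2 (ν.prod ν)) :
    ∫ q : T × T, (h q.1 q.2 ^ 2 + h q.1 q.2 * h q.2 q.1) ∂(ν.prod ν) =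
      (∫ q : T × T, h q.1 q.2 * h q.1 q.2 ∂(ν.prod ν))
        + ∫ q : T × T, h q.1 q.2 * h q.2 q.1 ∂(ν.prod ν) := by
  simp_rw [sq]
  exact integral_add
    (hL2.integrable_comp_mul_comp (MeasurePreserving.id _) (MeasurePreserving.id _))
    (hL2.integrable_comp_mul_comp (MeasurePreserving.id _) Measure.measurePreserving_swap)

lemma integral_triple_products_add (hL2 : MemLp (fun q : T × T => h q.1 q.2) 2 (ν.prod ν)) :
    ∫ q : T × T × T,
        (h q.1 q.2.1 * h q.1 q.2.2 + h q.1 q.2.1 * h q.2.2 q.1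
          + h q.1 q.2.1 * h q.2.1 q.2.2 + h q.1 q.2.1 * h q.2.2 q.2.1) ∂(ν.prod (ν.prod ν)) =
      (∫ q : T × T × T, h q.1 q.2.1 * h q.1 q.2.2 ∂(ν.prod (ν.prod ν)))
        + (∫ q : T × T × T, h q.1 q.2.1 * h q.2.2 q.1 ∂(ν.prod (ν.prod ν)))
        + (∫ q : T × T × T, h q.1 q.2.1 * h q.2.1 q.2.2 ∂(ν.prod (ν.prod ν)))
        + ∫ q : T × T × T, h q.1 q.2.1 * h q.2.2 q.2.1 ∂(ν.prod (ν.prod ν)) := by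
  have p₁₂ : MeasurePreserving (fun q : T × T × T => (q.1, q.2.1))
      (ν.prod (ν.prod ν)) (ν.prod ν) :=
    (MeasurePreserving.id ν).prod measurePreserving_fst
  have p₁₃ : MeasurePreserving (fun q : T × T × T => (q.1, q.2.2))
      (ν.prod (ν.prod ν)) (ν.prod ν) :=
    (MeasurePreserving.id ν).prod measurePreserving_snd
  have p₂₃ : MeasurePreserving (fun q : T × T × T => q.2) (ν.prod (ν.prod ν)) (ν.prod ν) :=
    measurePreserving_snd
  have I₁ : Integrable (fun q : T × T × T => h q.1 q.2.1 * h q.1 q.2.2) (ν.prod (ν.prod ν)) :=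
    hL2.integrable_comp_mul_comp p₁₂ p₁₃
  have I₂ : Integrable (fun q : T × T × T => h q.1 q.2.1 * h q.2.2 q.1) (ν.prod (ν.prod ν)) :=
    hL2.integrable_comp_mul_comp p₁₂ (Measure.measurePreserving_swap.comp p₁₃)
  have I₃ : Integrable (fun q : T × T × T => h q.1 q.2.1 * h q.2.1 q.2.2) (ν.prod (ν.prod ν)) :=
    hL2.integrable_comp_mul_comp p₁₂ p₂₃
  have I₄ : Integrable (fun q : T × T × T => h q.1 q.2.1 * h q.2.2 q.2.1) (ν.prod (ν.prod ν)) :=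
    hL2.integrable_comp_mul_comp p₁₂ (Measure.measurePreserving_swap.comp p₂₃)
  rw [integral_add ((I₁.fun_add I₂).fun_add I₃) I₄, integral_add (I₁.fun_add I₂) I₃,
    integral_add I₁ I₂]

theorem variance_sum_offDiagTerm (hmeas : Measurable (Function.uncurry h))
    (hL2 : MemLp (fun q : T × T => h q.1 q.2) 2 (ν.prod ν)) :
    Var[∑ p : ι × ι, offDiagTerm h p; Measure.pi fun _ => ν] =
      Fintype.card ι * (Fintype.card ι - 1) *
        ((∫ q : T × T, (h q.1 q.2 ^ 2 + h q.1 q.2 * h q.2 q.1) ∂(ν.prod ν))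
            - 2 * (∫ q : T × T, h q.1 q.2 ∂(ν.prod ν)) ^ 2
          + (Fintype.card ι - 2) *
            ((∫ q : T × T × T,
                (h q.1 q.2.1 * h q.1 q.2.2 + h q.1 q.2.1 * h q.2.2 q.1
                  + h q.1 q.2.1 * h q.2.1 q.2.2 + h q.1 q.2.1 * h q.2.2 q.2.1)
              ∂(ν.prod (ν.prod ν)))
              - 4 * (∫ q : T × T, h q.1 q.2 ∂(ν.prod ν)) ^ 2)) := by
  simp_rw [variance_sum (memLp_offDiagTerm ν hL2), covariance_offDiagTerm ν hmeas hL2,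
    sum_overlapCov, integral_sq_add_mul_swap ν hL2, integral_triple_products_add ν hL2]
  ring

end Terms

end UStatistic

/-- Exact variance formula for a second-order U-statistic (equation `eq:exact.var`,
Appendix G.3 of the paper): for `h` square-integrable w.r.t. `ν ⊗ ν` and
`U := (n(n-1))⁻¹ ∑_{i≠j} h(Oᵢ, Oⱼ)` over `n ≥ 4` i.i.d. copies,
`Var[U] = (n(n-1))⁻¹ E[h₁₂² + h₁₂h₂₁] + ((n-2)/(n(n-1))) E[h₁₂h₁₃ + h₁₂h₃₁ + h₁₂h₂₃ + h₁₂h₃₂]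
  + ((n-2)(n-3)/(n(n-1)) - 1) (E[h₁₂])²`. -/
theorem stmt9 {T : Type*} [MeasurableSpace T] (ν : Measure T) [IsProbabilityMeasure ν]
    (h : T → T → ℝ) (hmeas : Measurable (Function.uncurry h))
    (hL2 : Integrable (fun q : T × T => (h q.1 q.2) ^ 2) (ν.prod ν))
    (n : ℕ) (hn : 4 ≤ n)
    (U : (Fin n → T) → ℝ)
    (hU : U = fun x => ((n : ℝ) * ((n : ℝ) - 1))⁻¹ *
        ∑ i : Fin n, ∑ j : Fin n, (if i = j then 0 else h (x i) (x j))) :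
    variance U (Measure.pi fun _ : Fin n => ν)
      = ((n : ℝ) * ((n : ℝ) - 1))⁻¹ *
          (∫ q : T × T, ((h q.1 q.2) ^ 2 + h q.1 q.2 * h q.2 q.1) ∂(ν.prod ν))
        + (((n : ℝ) - 2) / ((n : ℝ) * ((n : ℝ) - 1))) *
            (∫ q : T × T × T,
                (h q.1 q.2.1 * h q.1 q.2.2 + h q.1 q.2.1 * h q.2.2 q.1
                  + h q.1 q.2.1 * h q.2.1 q.2.2 + h q.1 q.2.1 * h q.2.2 q.2.1)
              ∂(ν.prod (ν.prod ν)))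
        + (((n : ℝ) - 2) * ((n : ℝ) - 3) / ((n : ℝ) * ((n : ℝ) - 1)) - 1) *
            (∫ q : T × T, h q.1 q.2 ∂(ν.prod ν)) ^ 2 := by
  have hL2' : MemLp (fun q : T × T => h q.1 q.2) 2 (ν.prod ν) :=
    (memLp_two_iff_integrable_sq (by fun_prop)).2 hL2
  have hU' : U = fun x => ((n : ℝ) * ((n : ℝ) - 1))⁻¹ *
      (∑ p : Fin n × Fin n, UStatistic.offDiagTerm h p) x := by
    simp [hU, Finset.sum_apply, UStatistic.offDiagTerm, Fintype.sum_prod_type]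
  have hn' : (4 : ℝ) ≤ n := by exact_mod_cast hn
  have hn₀ : (n : ℝ) ≠ 0 := by linarith
  have hn₁ : (n : ℝ) - 1 ≠ 0 := by linarith
  rw [hU', variance_const_mul, UStatistic.variance_sum_offDiagTerm ν hmeas hL2', Fintype.card_fin]
  field_simp
  ring
end

section
/- Let X₁, …, Xₙ (n ≥ 3) be i.i.d. random elements of a measurable space S with law μ, let ξ_b, ξ_p : S → ℝ and z̄ : S → ℝᵏ be bounded measurable with Ω := ∫ z̄ z̄ᵀ dμ invertible, and set Ω̂ := (1/n) Σ_{i=1}^{n} z̄(Xᵢ) z̄(Xᵢ)ᵀ and Ω̂_{−1,−2} := (1/n) Σ_{i=3}^{n} z̄(Xᵢ) z̄(Xᵢ)ᵀ. Assume Ω̂ and Ω̂_{−1,−2} are almost surely invertible and that all the entries appearing below are integrable. Then E[ ξ_b(X₁) z̄(X₁)ᵀ ( Ω̂⁻¹ − Ω⁻¹ ) z̄(X₂) ξ_p(X₂) ] = E[ ξ_b(X₁) z̄(X₁)ᵀ ( Ω̂_{−1,−2}⁻¹ − Ω⁻¹ ) z̄(X₂) ξ_p(X₂) ] − (1/n)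 E[ ξ_b(X₁) z̄(X₁)ᵀ Ω̂_{−1,−2}⁻¹ ( z̄(X₁) z̄(X₁)ᵀ + z̄(X₂) z̄(X₂)ᵀ ) Ω̂⁻¹ z̄(X₂) ξ_p(X₂) ]. -/
open MeasureTheory

/-- Exact decomposition of the estimation bias of `ÎF₂₂,k([Ω̂ᵏᵉˢᵗ]⁻¹)` (equation
`eq:heuristic`, Appendix C of the paper): with `Ω̂ = (1/n) ∑ᵢ z̄(Xᵢ)z̄(Xᵢ)ᵀ` and the
leave-two-out `Ω̂₋₁,₋₂ = (1/n) ∑_{i≥3} z̄(Xᵢ)z̄(Xᵢ)ᵀ`, both a.s. invertible,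
`E[ξ_b(X₁) z̄(X₁)ᵀ (Ω̂⁻¹ - Ω⁻¹) z̄(X₂) ξ_p(X₂)]
 = E[ξ_b(X₁) z̄(X₁)ᵀ (Ω̂₋₁,₋₂⁻¹ - Ω⁻¹) z̄(X₂) ξ_p(X₂)]
   - (1/n) E[ξ_b(X₁) z̄(X₁)ᵀ Ω̂₋₁,₋₂⁻¹ (z̄(X₁)z̄(X₁)ᵀ + z̄(X₂)z̄(X₂)ᵀ) Ω̂⁻¹ z̄(X₂) ξ_p(X₂)]`. -/
theorem stmt19 {S : Type*} [MeasurableSpace S] (μ : Measure S) [IsProbabilityMeasure μ]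
    (n : ℕ) (hn : 3 ≤ n)
    (ξb ξp : S → ℝ) (hξb : Measurable ξb) (hξp : Measurable ξp)
    (C : ℝ) (hξbB : ∀ s, |ξb s| ≤ C) (hξpB : ∀ s, |ξp s| ≤ C)
    {k : ℕ} (z : S → Fin k → ℝ) (hz : ∀ j, Measurable fun s => z s j)
    (hzB : ∀ s j, |z s j| ≤ C)
    (G : Matrix (Fin k) (Fin k) ℝ)
    (hG : ∀ i j, G i j = ∫ s, z s i * z s j ∂μ) (hGinv : IsUnit G)
    (Ωh Ωm : (Fin n → S) → Matrix (Fin k) (Fin k) ℝ)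
    (hΩh : Ωh = fun x => ((n : ℝ)⁻¹) •
        ∑ i : Fin n, Matrix.vecMulVec (z (x i)) (z (x i)))
    (hΩm : Ωm = fun x => ((n : ℝ)⁻¹) •
        ∑ i ∈ Finset.univ.filter (fun i : Fin n => 2 ≤ (i : ℕ)),
          Matrix.vecMulVec (z (x i)) (z (x i)))
    (hinv1 : ∀ᵐ x ∂(Measure.pi fun _ : Fin n => μ), IsUnit (Ωh x))
    (hinv2 : ∀ᵐ x ∂(Measure.pi fun _ : Fin n => μ), IsUnit (Ωm x))
    (i₁ i₂ : Fin n) (hi₁ : (i₁ : ℕ) = 0) (hi₂ : (i₂ : ℕ) = 1)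
    (hint1 : Integrable (fun x : Fin n → S =>
        ξb (x i₁) * (∑ a, ∑ c, z (x i₁) a * ((Ωh x)⁻¹ - G⁻¹) a c * z (x i₂) c) * ξp (x i₂))
      (Measure.pi fun _ : Fin n => μ))
    (hint2 : Integrable (fun x : Fin n → S =>
        ξb (x i₁) * (∑ a, ∑ c, z (x i₁) a * ((Ωm x)⁻¹ - G⁻¹) a c * z (x i₂) c) * ξp (x i₂))
      (Measure.pi fun _ : Fin n => μ))
    (hint3 : Integrable (fun x : Fin n → S =>
        ξb (x i₁) *
          (∑ a, ∑ c,
            z (x i₁) a *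
              ((Ωm x)⁻¹ *
                  (Matrix.vecMulVec (z (x i₁)) (z (x i₁)) +
                    Matrix.vecMulVec (z (x i₂)) (z (x i₂))) *
                (Ωh x)⁻¹) a c *
              z (x i₂) c) *
          ξp (x i₂))
      (Measure.pi fun _ : Fin n => μ)) :
    (∫ x : Fin n → S,
        ξb (x i₁) * (∑ a, ∑ c, z (x i₁) a * ((Ωh x)⁻¹ - G⁻¹) a c * z (x i₂) c) * ξp (x i₂)
        ∂(Measure.pi fun _ : Fin n => μ))
      = (∫ x : Fin n → S,
            ξb (x i₁) * (∑ a, ∑ c, z (x i₁) a * ((Ωm x)⁻¹ - G⁻¹) a c * z (x i₂) c) * ξp (x i₂)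
            ∂(Measure.pi fun _ : Fin n => μ))
        - (n : ℝ)⁻¹ *
            ∫ x : Fin n → S,
              ξb (x i₁) *
                (∑ a, ∑ c,
                  z (x i₁) a *
                    ((Ωm x)⁻¹ *
                        (Matrix.vecMulVec (z (x i₁)) (z (x i₁)) +
                          Matrix.vecMulVec (z (x i₂)) (z (x i₂))) *
                      (Ωh x)⁻¹) a c *
                    z (x i₂) c) *
                ξp (x i₂)
              ∂(Measure.pi fun _ : Fin n => μ) := by
  set ν := (Measure.pi fun _ : Fin n => μ) with hν
  have hne : i₁ ≠ i₂ := by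
    intro h; rw [h, hi₂] at hi₁; omega
  -- pointwise a.e. identity
  have hae : ∀ᵐ x ∂ν,
      ξb (x i₁) * (∑ a, ∑ c, z (x i₁) a * ((Ωh x)⁻¹ - G⁻¹) a c * z (x i₂) c) * ξp (x i₂)
      = ξb (x i₁) * (∑ a, ∑ c, z (x i₁) a * ((Ωm x)⁻¹ - G⁻¹) a c * z (x i₂) c) * ξp (x i₂)
        - (n : ℝ)⁻¹ *
          (ξb (x i₁) *
            (∑ a, ∑ c,
              z (x i₁) a *
                ((Ωm x)⁻¹ *
                    (Matrix.vecMulVec (z (x i₁)) (z (x i₁)) +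
                      Matrix.vecMulVec (z (x i₂)) (z (x i₂))) *
                  (Ωh x)⁻¹) a c *
                z (x i₂) c) *
            ξp (x i₂)) := by
    filter_upwards [hinv1, hinv2] with x h1 h2
    have hdiff : Ωh x - Ωm x = (n : ℝ)⁻¹ •
        (Matrix.vecMulVec (z (x i₁)) (z (x i₁)) +
          Matrix.vecMulVec (z (x i₂)) (z (x i₂))) := by
      have hset : Finset.univ.filter (fun i : Fin n => ¬ 2 ≤ (i : ℕ)) = {i₁, i₂} := by
        ext i
        simp only [Finset.mem_filter, Finset.mem_univ, true_and, Finset.mem_insert,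
          Finset.mem_singleton, not_le]
        constructor
        · intro h
          interval_cases hiv : (i : ℕ)
          · left; exact Fin.ext (by omega)
          · right; exact Fin.ext (by omega)
        · rintro (rfl | rfl) <;> omega
      have hsum : (∑ i : Fin n, Matrix.vecMulVec (z (x i)) (z (x i)))
          - (∑ i ∈ Finset.univ.filter (fun i : Fin n => 2 ≤ (i : ℕ)),
              Matrix.vecMulVec (z (x i)) (z (x i)))
          = Matrix.vecMulVec (z (x i₁)) (z (x i₁)) +
            Matrix.vecMulVec (z (x i₂)) (z (x i₂)) := by
        rw [← Finset.sum_filter_add_sum_filter_not Finset.univ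
          (fun i : Fin n => 2 ≤ (i : ℕ)), hset, Finset.sum_pair hne]
        abel
      rw [hΩh, hΩm]
      simp only [← smul_sub, hsum]
    have hmat : (Ωh x)⁻¹ - G⁻¹ = ((Ωm x)⁻¹ - G⁻¹) -
        (n : ℝ)⁻¹ • ((Ωm x)⁻¹ *
          (Matrix.vecMulVec (z (x i₁)) (z (x i₁)) +
            Matrix.vecMulVec (z (x i₂)) (z (x i₂))) * (Ωh x)⁻¹) := by
      have key : (Ωm x)⁻¹ * (Ωh x - Ωm x) * (Ωh x)⁻¹ = (Ωm x)⁻¹ - (Ωh x)⁻¹ := by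
        rw [mul_sub, sub_mul, mul_assoc,
          Matrix.mul_nonsing_inv _ ((Matrix.isUnit_iff_isUnit_det _).mp h1),
          Matrix.nonsing_inv_mul _ ((Matrix.isUnit_iff_isUnit_det _).mp h2)]
        simp
      calc (Ωh x)⁻¹ - G⁻¹ = ((Ωm x)⁻¹ - G⁻¹) - ((Ωm x)⁻¹ - (Ωh x)⁻¹) := by abel
        _ = _ := by
            rw [← key, hdiff]
            congr 1
            rw [Matrix.mul_smul, Matrix.smul_mul]
    rw [hmat]
    have hlin : ∀ (E M : Matrix (Fin k) (Fin k) ℝ),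
        (∑ a, ∑ c, z (x i₁) a * (E - (n : ℝ)⁻¹ • M) a c * z (x i₂) c)
        = (∑ a, ∑ c, z (x i₁) a * E a c * z (x i₂) c)
          - (n : ℝ)⁻¹ * ∑ a, ∑ c, z (x i₁) a * M a c * z (x i₂) c := by
      intro E M
      rw [Finset.mul_sum, ← Finset.sum_sub_distrib]
      refine Finset.sum_congr rfl fun a _ => ?_
      rw [Finset.mul_sum, ← Finset.sum_sub_distrib]
      refine Finset.sum_congr rfl fun c _ => ?_
      simp only [Matrix.sub_apply, Matrix.smul_apply, smul_eq_mul]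
      ring
    rw [hlin]
    ring
  rw [integral_congr_ae hae, integral_sub hint2 (hint3.const_mul _),
    integral_const_mul]
end
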